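/- arXiv:2006.15348 — 7 statements merged into one kernel-verified Lean document; each statement's English description precedes it below -/
import Mathlib

section
/- For every finite word u in the language of a simple Toeplitz subshift with |u| ≤ |p^(k)| + 1, there exists a letter a ∈ A_{k+1} := {a_j : j ≥ k+1} such that u is a subword of the word p^(k) a p^(k). -/
/-
Every block `p^(m)` with `m ≥ k` is a concatenation `p^(k) ⋆ p^(k) ⋆ ⋯ ⋆ p^(k)` whose separating
letters `⋆` are among `a_k, a_{k+1}, …`. A word of length at most `|p^(k)| + 1` inside such a
concatenation cannot contain two separators, so it lies in `p^(k) ⋆ p^(k)` for one of them.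
Since the blocks are nested prefixes of growing length, every word occurring in `p^(∞)` occurs in
some `p^(m)` with `m` as large as we like.
-/

def pBlock {A : Type*} (a : ℕ → A) (n : ℕ → ℕ) : ℕ → List A
  | 0 => []
  | k + 1 => (List.replicate (n k - 1) (pBlock a n k ++ [a k])).flatten ++ pBlock a n k

/-- The one-sided infinite limit word `p^(∞)` of the nested blocks `p^(k)`. -/
def pInf {A : Type*} (a : ℕ → A) (n : ℕ → ℕ) : ℕ → A :=
  fun i => (pBlock a n (i + 2)).getD i (a 0)

def occursIn1 {A : Type*} (u : List A) (ρ : ℕ → A) : Prop :=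
  ∃ j : ℕ, ∀ i : Fin u.length, u.get i = ρ (j + (i : ℕ))

namespace List

variable {α : Type*}

/-- A window starting inside `xs` reaches at most `|l| - 1` letters into `ys`. -/
theorem infix_append_take_or_infix_right {l xs ys : List α} (h : l <:+: xs ++ ys) :
    l <:+: xs ++ ys.take (l.length - 1) ∨ l <:+: ys := by
  rcases infix_append_iff_ne_nil.mp h with hxs | hys | ⟨l₁, l₂, hl₁, -, rfl, hs, hp⟩
  · exact Or.inl (infix_append_of_infix_left hxs)
  · exact Or.inr hys
  · refine Or.inl (infix_append_iff.mpr (Or.inr (Or.inr ⟨l₁, l₂, rfl, hs, ?_⟩)))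
    have hl₂ : l₂.length ≤ (l₁ ++ l₂).length - 1 := by
      have := length_pos_iff.mpr hl₁
      simp only [length_append]
      omega
    exact prefix_take_iff.mpr ⟨hp, hl₂⟩

end List

section BlockJoin

variable {A : Type*}

/-- `blockJoin P [b₁, …, bᵣ] = P b₁ P b₂ ⋯ bᵣ P`. -/
def blockJoin (P : List A) : List A → List A
  | [] => P
  | b :: bs => P ++ b :: blockJoin P bs

theorem prefix_blockJoin (P bs : List A) : P <+: blockJoin P bs := by
  cases bs <;> simp [blockJoin]

theorem blockJoin_append_cons (P bs₁ bs₂ : List A) (c : A) :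
    blockJoin P bs₁ ++ c :: blockJoin P bs₂ = blockJoin P (bs₁ ++ c :: bs₂) := by
  induction bs₁ with
  | nil => rfl
  | cons b bs₁ ih => simp [blockJoin, ← ih]

theorem infix_or_exists_infix_of_infix_blockJoin {P u : List A} (hlen : u.length ≤ P.length + 1) :
    ∀ {bs : List A}, u <:+: blockJoin P bs → u <:+: P ∨ ∃ b ∈ bs, u <:+: P ++ b :: P
  | [], hu => Or.inl hu
  | b :: bs, hu => by
    have hsplit : blockJoin P (b :: bs) = (P ++ [b]) ++ blockJoin P bs := by simp [blockJoin]
    rcases List.infix_append_take_or_infix_right (hsplit ▸ hu) with hu | hu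
    · have htake : (blockJoin P bs).take (u.length - 1) <+: P :=
        calc (blockJoin P bs).take (u.length - 1)
            _ <+: (blockJoin P bs).take P.length := List.take_prefix_take_left (by omega)
            _ = P := (List.prefix_iff_eq_take.mp (prefix_blockJoin P bs)).symm
      refine Or.inr ⟨b, List.mem_cons_self, hu.trans ?_⟩
      simpa using ((List.prefix_append_right_inj (P ++ [b])).mpr htake).isInfix
    · rcases infix_or_exists_infix_of_infix_blockJoin hlen hu with hu | ⟨c, hc, hu⟩
      · exact Or.inl hu
      · exact Or.inr ⟨c, List.mem_cons_of_mem b hc, hu⟩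

theorem flatten_replicate_append_blockJoin (P bs : List A) (c : A) (t : ℕ) :
    (List.replicate t (blockJoin P bs ++ [c])).flatten ++ blockJoin P bs =
      blockJoin P ((List.replicate t (bs ++ [c])).flatten ++ bs) := by
  induction t with
  | zero => rfl
  | succ t ih => simp [List.replicate_succ, ih, blockJoin_append_cons]

end BlockJoin

section SimpleToeplitz

variable {A : Type*} (a : ℕ → A) (n : ℕ → ℕ)

theorem pBlock_succ (m : ℕ) :
    pBlock a n (m + 1) =
      (List.replicate (n m - 1) (pBlock a n m ++ [a m])).flatten ++ pBlock a n m := rfl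

theorem pBlock_prefix_pBlock_succ (m : ℕ) : pBlock a n m <+: pBlock a n (m + 1) := by
  rw [pBlock_succ]
  cases n m - 1 with
  | zero => simp
  | succ t => simp [List.replicate_succ, List.append_assoc]

theorem pBlock_prefix_pBlock_of_le {m₁ m₂ : ℕ} (h : m₁ ≤ m₂) :
    pBlock a n m₁ <+: pBlock a n m₂ := by
  induction m₂, h using Nat.le_induction with
  | base => exact List.prefix_rfl
  | succ m _ ih => exact ih.trans (pBlock_prefix_pBlock_succ a n m)

theorem length_pBlock_lt_succ {m : ℕ} (h : 2 ≤ n m) :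
    (pBlock a n m).length < (pBlock a n (m + 1)).length := by
  obtain ⟨t, ht⟩ : ∃ t, n m - 1 = t + 1 := ⟨n m - 2, by omega⟩
  simp [pBlock_succ, ht, List.replicate_succ]

theorem le_length_pBlock (hn : ∀ k, 2 ≤ n k) (m : ℕ) : m ≤ (pBlock a n m).length := by
  induction m with
  | zero => exact Nat.zero_le _
  | succ m ih => exact ih.trans_lt (length_pBlock_lt_succ a n (hn m))

theorem pInf_eq_getElem (hn : ∀ k, 2 ≤ n k) {i m : ℕ} (h : i < (pBlock a n m).length) :
    pInf a n i = (pBlock a n m)[i] := by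
  have hi : i < (pBlock a n (i + 2)).length := by
    have := le_length_pBlock a n hn (i + 2)
    omega
  rw [pInf, List.getD_eq_getElem _ _ hi]
  rcases le_total (i + 2) m with hle | hle
  · exact (pBlock_prefix_pBlock_of_le a n hle).getElem hi
  · exact ((pBlock_prefix_pBlock_of_le a n hle).getElem h).symm

theorem exists_infix_pBlock_of_occursIn1 (hn : ∀ k, 2 ≤ n k) {u : List A}
    (hu : occursIn1 u (pInf a n)) (k : ℕ) : ∃ m, k ≤ m ∧ u <:+: pBlock a n m := by
  obtain ⟨j, hj⟩ := hu
  have hlen : u.length + j ≤ (pBlock a n (max k (u.length + j))).length :=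
    (le_max_right _ _).trans (le_length_pBlock a n hn _)
  refine ⟨_, le_max_left _ _, List.infix_iff_getElem?.mpr ⟨j, hlen, fun i hi => ?_⟩⟩
  rw [List.getElem?_eq_getElem (by omega), ← pInf_eq_getElem a n hn, add_comm, ← hj ⟨i, hi⟩]
  rfl

theorem pBlock_eq_blockJoin {k m : ℕ} (h : k ≤ m) :
    ∃ bs : List A, (∀ b ∈ bs, b ∈ a '' Set.Ici k) ∧
      pBlock a n m = blockJoin (pBlock a n k) bs := by
  induction m, h using Nat.le_induction with
  | base => exact ⟨[], by simp, rfl⟩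
  | succ m hkm ih =>
    obtain ⟨bs, hbs, hm⟩ := ih
    refine ⟨(List.replicate (n m - 1) (bs ++ [a m])).flatten ++ bs, ?_, ?_⟩
    · intro b hb
      have hb' : b ∈ bs ∨ b = a m := by
        simp only [List.mem_append, List.mem_flatten, List.mem_replicate] at hb
        aesop
      rcases hb' with hb | rfl
      exacts [hbs b hb, ⟨m, hkm, rfl⟩]
    · rw [pBlock_succ, hm, flatten_replicate_append_blockJoin]

end SimpleToeplitz

theorem language_subword_of_block_general {A : Type*} (a : ℕ → A) (n : ℕ → ℕ)
    (hn : ∀ k, 2 ≤ n k) (k : ℕ) (u : List A)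
    (hu : occursIn1 u (pInf a n)) (hlen : u.length ≤ (pBlock a n (k + 1)).length + 1) :
    ∃ b : A, (∃ j, k + 1 ≤ j ∧ a j = b) ∧
      u <:+: (pBlock a n (k + 1) ++ [b] ++ pBlock a n (k + 1)) := by
  obtain ⟨m, hkm, hum⟩ := exists_infix_pBlock_of_occursIn1 a n hn hu (k + 1)
  obtain ⟨bs, hbs, hm⟩ := pBlock_eq_blockJoin a n hkm
  rw [hm] at hum
  rcases infix_or_exists_infix_of_infix_blockJoin hlen hum with hu | ⟨b, hb, hu⟩
  · exact ⟨a (k + 1), ⟨k + 1, le_rfl, rfl⟩,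
      hu.trans (List.infix_append_left.trans List.infix_append_left)⟩
  · exact ⟨b, hbs b hb, by simpa using hu⟩

/-- Every word `u` of the language with `|u| ≤ |p^(k)| + 1` is a subword of `p^(k) a p^(k)`
for some letter `a ∈ A_{k+1} = {a_j : j ≥ k+1}`. -/
theorem language_subword_of_block {A : Type*} [Fintype A] (a : ℕ → A) (n : ℕ → ℕ)
    (hn : ∀ k, 2 ≤ n k) (ha : ∀ k, a (k + 1) ≠ a k) (k : ℕ) (u : List A)
    (hu : occursIn1 u (pInf a n)) (hlen : u.length ≤ (pBlock a n (k + 1)).length + 1) :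
    ∃ b : A, (∃ j, k + 1 ≤ j ∧ a j = b) ∧
      u <:+: (pBlock a n (k + 1) ++ [b] ++ pBlock a n (k + 1)) :=
  language_subword_of_block_general a n hn k u hu hlen
end

section
/- For all k ≥ 0, the number of distinct subwords of length |p^(k)|+1 occurring in the simple Toeplitz subshift equals (|A_k| − 1)·(|p^(k)|+1) + 1_{A_{k+1}}(a_k)·(|p^(k−1)|+1), where A_k := {a_j : j ≥ k} and 1_{A_{k+1}}(a_k) is 1 if a_k ∈ A_{k+1} and 0 otherwise. -/
/-!
Let `P = |p^(k)| + 1`. Away from the positions `≡ -1 (mod P)` the limit word agrees with the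
periodic word `(p^(k-1) a_k)^∞`, and at those positions it carries letters of `A_{k+1}`, each of
which actually occurs there. Hence a factor of length `P` is determined by its starting residue
modulo `P` and the letter `x ∈ A_{k+1}` at its unique such position, and every pair occurs.
Distinct pairs give distinct factors, except that for `x = a_k` the factor is one of
`(p^(k-1) a_k)^∞` and only depends on the residue modulo `|p^(k-1)| + 1`. The exception is a
recognizability property of the blocks, proved by induction on `k`: a spurious shift would make
the gcd of two periods a period, forcing `a_{k+1} = a_k`. Counting pairs gives the formula.
-/

open Classical

/-- The complexity function: the number of distinct words of length `L` in the language of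
the subshift generated by `ρ`. -/
noncomputable def complexity {A : Type*} (ρ : ℕ → A) (L : ℕ) : ℕ :=
  Nat.card {u : List A // u.length = L ∧ occursIn1 u ρ}

open Function

theorem Nat.dvd_add_one_iff_mod_eq_sub_one {p j : ℕ} (hp : 0 < p) :
    p ∣ j + 1 ↔ j % p = p - 1 := by
  have hr := Nat.mod_lt j hp
  conv_lhs => rw [← Nat.div_add_mod j p, add_assoc, Nat.dvd_add_right (dvd_mul_right _ _)]
  constructor
  · intro h
    have := Nat.eq_of_dvd_of_lt_two_mul (Nat.succ_ne_zero _) h (by omega)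
    omega
  · intro h
    rw [h, Nat.sub_add_cancel hp]

theorem List.getD_flatten_replicate {α : Type*} (l : List α) (d : α) {c i : ℕ}
    (hi : i < c * l.length) : (List.replicate c l).flatten.getD i d = l.getD (i % l.length) d := by
  induction c generalizing i with
  | zero => simp at hi
  | succ c ih =>
    rw [List.replicate_succ, List.flatten_cons]
    rcases lt_or_ge i l.length with h | h
    · rw [List.getD_append _ _ _ _ h, Nat.mod_eq_of_lt h]
    · rw [List.getD_append_right _ _ _ _ h, ih (by rw [add_one_mul] at hi; omega),
        Nat.mod_eq_sub_mod h]

theorem Function.Periodic.nat_gcd {α : Type*} {f : ℕ → α} {c d : ℕ} (hc : Periodic f c)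
    (hd : Periodic f d) : Periodic f (Nat.gcd c d) := by
  rcases lt_or_ge (Nat.gcd c d) d with hlt | hge
  · obtain ⟨m, -, hm⟩ := Nat.exists_mul_mod_eq_gcd hlt
    intro x
    calc f (x + Nat.gcd c d) = f (x + Nat.gcd c d + c * m / d * d) := ((hd.nat_mul _) _).symm
      _ = f (x + m * c) := by
        have := Nat.div_add_mod (c * m) d
        rw [hm] at this
        congr 1
        linarith
      _ = f x := (hc.nat_mul m) x
  · rcases Nat.eq_zero_or_pos d with rfl | hd0
    · rwa [Nat.gcd_zero_right]
    · rwa [le_antisymm (Nat.gcd_le_right _ hd0) hge]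

/-- Each residue class modulo `p` meets at most one of the two residue classes modulo `q`
excluded in `h`, so one of `y`, `y + p` avoids both. -/
theorem Function.Periodic.of_eq_of_not_dvd {α : Type*} {f : ℕ → α} {p q d : ℕ}
    (hf : Periodic f p) (hpq : p ∣ q) (hqp : ¬ q ∣ p) (hpd : ¬ p ∣ d)
    (h : ∀ y, ¬ q ∣ y + 1 → ¬ q ∣ y + d + 1 → f (y + d) = f y) : Periodic f d := by
  intro y
  by_cases hy : ¬ q ∣ y + 1 ∧ ¬ q ∣ y + d + 1
  · exact h y hy.1 hy.2
  have cancel : ∀ {r u v : ℕ}, r ∣ u → r ∣ u + v → r ∣ v := fun hu huv =>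
    (Nat.dvd_add_right hu).mp huv
  have hy' : ¬ q ∣ y + p + 1 ∧ ¬ q ∣ y + p + d + 1 := by
    rw [not_and_or, not_not, not_not] at hy
    constructor <;> intro h' <;> rcases hy with h1 | h1
    · exact hqp (cancel h1 (by rwa [add_right_comm] at h'))
    · have hy1 : p ∣ y + 1 :=
        cancel (dvd_refl p) (by rw [show p + (y + 1) = y + p + 1 by ring]; exact hpq.trans h')
      exact hpd (cancel hy1 (by rw [add_right_comm]; exact hpq.trans h1))
    · have hpd' : p ∣ p + d :=
        cancel (hpq.trans h1)
          (by rw [show y + 1 + (p + d) = y + p + d + 1 by ring]; exact hpq.trans h')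
      exact hpd (cancel (dvd_refl p) hpd')
    · exact hqp (cancel h1 (by rwa [show y + d + 1 + p = y + p + d + 1 by ring]))
  calc f (y + d) = f (y + d + p) := (hf _).symm
    _ = f (y + p + d) := by rw [add_right_comm]
    _ = f (y + p) := h _ hy'.1 hy'.2
    _ = f y := hf y

theorem natCard_setOf_exists_le_apply_eq {A : Type*} [Fintype A] (a : ℕ → A) (k : ℕ) :
    Nat.card ↥{x : A | ∃ j, k ≤ j ∧ a j = x}
      = ((Finset.univ.filter fun x => ∃ j, k + 1 ≤ j ∧ a j = x).erase (a k)).card + 1 := by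
  have : {x : A | ∃ j, k ≤ j ∧ a j = x}
      = ↑(insert (a k) (Finset.univ.filter fun x => ∃ j, k + 1 ≤ j ∧ a j = x)) := by
    ext x
    simp only [Set.mem_ofPred_eq, Finset.coe_insert, Set.mem_insert_iff, Finset.coe_filter,
      Finset.mem_univ, true_and]
    constructor
    · rintro ⟨j, hj, rfl⟩
      rcases hj.eq_or_lt with rfl | hlt
      exacts [Or.inl rfl, Or.inr ⟨j, hlt, rfl⟩]
    · rintro (rfl | ⟨j, hj, rfl⟩)
      exacts [⟨k, le_rfl, rfl⟩, ⟨j, by omega, rfl⟩]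
  rw [Nat.card_coe_set_eq, this, Set.ncard_coe_finset, ← Finset.erase_insert_eq_erase,
    Finset.card_erase_add_one (Finset.mem_insert_self _ _)]

namespace SimpleToeplitz

variable {A : Type*}

/-- `pBlock a n m` is the paper's `p^(m-1)`, so `periodicWord a n m` is `(p^(m-1) a_m)^∞`, of
period `period a n m`. Positions `j` with `period a n m ∣ j + 1` are the holes of level `m`. -/
def period (a : ℕ → A) (n : ℕ → ℕ) (m : ℕ) : ℕ := (pBlock a n m).length + 1

def periodicWord (a : ℕ → A) (n : ℕ → ℕ) (m j : ℕ) : A :=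
  (pBlock a n m ++ [a m]).getD (j % period a n m) (a 0)

variable {a : ℕ → A} {n : ℕ → ℕ}

theorem period_pos (m : ℕ) : 0 < period a n m := Nat.succ_pos _

theorem period_zero : period a n 0 = 1 := rfl

theorem length_pBlock_append (m : ℕ) : (pBlock a n m ++ [a m]).length = period a n m := by
  simp [period]

theorem pBlock_succ_append (hn : ∀ k, 2 ≤ n k) (m : ℕ) :
    pBlock a n (m + 1) ++ [a m] = (List.replicate (n m) (pBlock a n m ++ [a m])).flatten := by
  conv_rhs => rw [show n m = (n m - 1) + 1 by have := hn m; omega]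
  rw [List.replicate_succ', List.flatten_append, pBlock]
  simp

theorem period_succ (hn : ∀ k, 2 ≤ n k) (m : ℕ) :
    period a n (m + 1) = n m * period a n m := by
  simpa [period] using congrArg List.length (pBlock_succ_append (a := a) hn m)

theorem period_dvd_period (hn : ∀ k, 2 ≤ n k) {m M : ℕ} (h : m ≤ M) :
    period a n m ∣ period a n M := by
  induction M, h using Nat.le_induction with
  | base => rfl
  | succ M _ ih => exact ih.trans ⟨n M, by rw [period_succ hn, mul_comm]⟩

theorem period_lt_period_succ (hn : ∀ k, 2 ≤ n k) (m : ℕ) :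
    period a n m < period a n (m + 1) := by
  rw [period_succ hn]
  have := hn m
  have := period_pos (a := a) (n := n) m
  nlinarith

theorem lt_period (hn : ∀ k, 2 ≤ n k) (m : ℕ) : m < period a n m := by
  induction m with
  | zero => exact period_pos 0
  | succ m ih => exact lt_of_le_of_lt ih (period_lt_period_succ hn m)

theorem not_period_succ_dvd (hn : ∀ k, 2 ≤ n k) (m : ℕ) :
    ¬ period a n (m + 1) ∣ period a n m :=
  fun h => absurd (Nat.le_of_dvd (period_pos m) h) (not_le.mpr (period_lt_period_succ hn m))

theorem periodicWord_of_dvd {m j : ℕ} (h : period a n m ∣ j + 1) :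
    periodicWord a n m j = a m := by
  rw [periodicWord, (Nat.dvd_add_one_iff_mod_eq_sub_one (period_pos m)).mp h,
    List.getD_append_right _ _ _ _ (by simp [period])]
  simp [period]

theorem periodicWord_eq_of_modEq {m M j j' : ℕ} (hM : period a n m ∣ M)
    (h : j ≡ j' [MOD M]) : periodicWord a n m j = periodicWord a n m j' := by
  rw [periodicWord, periodicWord, h.of_dvd hM]

theorem getD_pBlock_succ_append (hn : ∀ k, 2 ≤ n k) {m j : ℕ} (hj : j < period a n (m + 1)) :
    (pBlock a n (m + 1) ++ [a m]).getD j (a 0) = periodicWord a n m j := by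
  rw [pBlock_succ_append hn, List.getD_flatten_replicate, length_pBlock_append, periodicWord]
  rwa [length_pBlock_append, ← period_succ hn]

theorem periodicWord_succ (hn : ∀ k, 2 ≤ n k) {m j : ℕ}
    (h : ¬ period a n (m + 1) ∣ j + 1) : periodicWord a n (m + 1) j = periodicWord a n m j := by
  have hlt : j % period a n (m + 1) < (pBlock a n (m + 1)).length := by
    rw [Nat.dvd_add_one_iff_mod_eq_sub_one (period_pos _)] at h
    have := Nat.mod_lt j (period_pos (a := a) (n := n) (m + 1))
    simp only [period] at h this ⊢
    omega
  rw [periodicWord, List.getD_append _ _ _ _ hlt, ← List.getD_append _ [a m] _ _ hlt,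
    getD_pBlock_succ_append hn (Nat.mod_lt _ (period_pos _))]
  exact periodicWord_eq_of_modEq (period_dvd_period hn m.le_succ) (Nat.mod_modEq _ _)

theorem periodicWord_eq_of_le (hn : ∀ k, 2 ≤ n k) {m M j : ℕ} (hmM : m ≤ M)
    (h : ¬ period a n (m + 1) ∣ j + 1) : periodicWord a n M j = periodicWord a n m j := by
  induction M, hmM using Nat.le_induction with
  | base => rfl
  | succ M hmM ih =>
    rw [periodicWord_succ hn fun hM => h ((period_dvd_period hn (by omega)).trans hM), ih]

theorem pInf_eq_periodicWord (hn : ∀ k, 2 ≤ n k) {m j : ℕ}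
    (h : ¬ period a n (m + 1) ∣ j + 1) : pInf a n j = periodicWord a n m j := by
  have hj : j < (pBlock a n (j + 2)).length := by
    have := lt_period (a := a) hn (j + 2)
    simp only [period] at this
    omega
  have hj' : j + 1 < period a n (j + 1 + 1) := (lt_period hn (j + 2)).trans' (by omega)
  rw [pInf, ← List.getD_append _ [a (j + 1)] _ _ hj, getD_pBlock_succ_append hn (by omega)]
  rcases le_total m (j + 1) with hle | hle
  · exact periodicWord_eq_of_le hn hle h
  · refine (periodicWord_eq_of_le hn hle fun hdvd => ?_).symm
    exact absurd (Nat.le_of_dvd j.succ_pos hdvd) (not_le.mpr hj')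

theorem pInf_eq_of_dvd_of_not_dvd (hn : ∀ k, 2 ≤ n k) {r j : ℕ}
    (h₁ : period a n r ∣ j + 1) (h₂ : ¬ period a n (r + 1) ∣ j + 1) :
    pInf a n j = a r := by
  rw [pInf_eq_periodicWord hn h₂, periodicWord_of_dvd h₁]

theorem pInf_period_sub_one (hn : ∀ k, 2 ≤ n k) (r : ℕ) :
    pInf a n (period a n r - 1) = a r := by
  have e : period a n r - 1 + 1 = period a n r := Nat.sub_add_cancel (period_pos r)
  exact pInf_eq_of_dvd_of_not_dvd hn (by rw [e]) (by rw [e]; exact not_period_succ_dvd hn r)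

theorem exists_pInf_eq (hn : ∀ k, 2 ≤ n k) {m j : ℕ} (h : period a n m ∣ j + 1) :
    ∃ r, m ≤ r ∧ pInf a n j = a r := by
  by_contra hne
  have hall : ∀ r, m ≤ r → period a n r ∣ j + 1 := by
    intro r hr
    induction r, hr using Nat.le_induction with
    | base => exact h
    | succ r hr ih =>
      by_contra h'
      exact hne ⟨r, hr, pInf_eq_of_dvd_of_not_dvd hn ih h'⟩
  exact absurd (Nat.le_of_dvd j.succ_pos (hall (j + 1 + m) (by omega)))
    (not_le.mpr ((lt_period hn _).trans_le' (by omega)))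

def factor (ρ : ℕ → A) (j L : ℕ) : List A := List.ofFn fun i : Fin L => ρ (j + i)

theorem occursIn1_iff_exists_factor {u : List A} {ρ : ℕ → A} :
    occursIn1 u ρ ↔ ∃ j, factor ρ j u.length = u := by
  refine exists_congr fun j => ⟨fun h => ?_, fun h i => ?_⟩
  · exact List.ext_get (by simp [factor]) fun i _ hi => by
      simpa [factor] using (h ⟨i, hi⟩).symm
  · rw [List.get_of_eq h.symm i]
    simp [factor]

theorem complexity_eq_ncard_range (ρ : ℕ → A) (L : ℕ) :
    complexity ρ L = (Set.range fun j => factor ρ j L).ncard := by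
  rw [complexity, ← Set.coe_ofPred, Nat.card_coe_set_eq]
  congr 1
  ext u
  simp only [Set.mem_ofPred_eq, Set.mem_range, occursIn1_iff_exists_factor]
  constructor
  · rintro ⟨rfl, j, hj⟩
    exact ⟨j, hj⟩
  · rintro ⟨j, rfl⟩
    exact ⟨by simp [factor], j, by simp [factor]⟩

/-- A factor of length `period a n (k + 1)` meets exactly one hole of level `k + 1`;
`windowWord a n k s x` is the factor starting at a position `≡ s` whose hole carries `x`. -/
def windowWord (a : ℕ → A) (n : ℕ → ℕ) (k s : ℕ) (x : A) : List A :=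
  List.ofFn fun i : Fin (period a n (k + 1)) =>
    if period a n (k + 1) ∣ s + i + 1 then x else periodicWord a n k (s + i)

theorem length_windowWord (k s : ℕ) (x : A) :
    (windowWord a n k s x).length = period a n (k + 1) := by
  simp [windowWord]

theorem getElem_windowWord {k s i : ℕ} {x : A} (hi : i < (windowWord a n k s x).length) :
    (windowWord a n k s x)[i]
      = if period a n (k + 1) ∣ s + i + 1 then x else periodicWord a n k (s + i) := by
  simp [windowWord]

theorem factor_pInf (hn : ∀ k, 2 ≤ n k) {k s : ℕ} (hs : s < period a n (k + 1)) (q : ℕ) :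
    factor (pInf a n) (period a n (k + 1) * q + s) (period a n (k + 1))
      = windowWord a n k s (pInf a n (period a n (k + 1) * q + (period a n (k + 1) - 1))) := by
  set L := period a n (k + 1)
  refine List.ext_getElem (by simp [factor, L, length_windowWord]) fun i hi _ => ?_
  have hiL : i < L := by simpa [factor] using hi
  rw [getElem_windowWord]
  simp only [factor, List.getElem_ofFn]
  split_ifs with hhole
  · have : s + i + 1 = L := Nat.eq_of_dvd_of_lt_two_mul (by omega) hhole (by omega)
    congr 1
    omega
  · have hhole' : ¬ L ∣ L * q + s + i + 1 := fun h =>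
      hhole ((Nat.dvd_add_right (dvd_mul_right L q)).mp (by simpa [add_assoc] using h))
    have hmod : L * q + s + i ≡ s + i [MOD L] := by
      rw [add_assoc]
      exact Nat.mul_add_mod _ _ _
    rw [pInf_eq_periodicWord hn hhole',
      periodicWord_eq_of_modEq (period_dvd_period hn k.le_succ) hmod]

theorem range_factor_pInf (hn : ∀ k, 2 ≤ n k) (k : ℕ) :
    (Set.range fun j => factor (pInf a n) j (period a n (k + 1)))
      = (fun p : ℕ × A => windowWord a n k p.1 p.2) ''
          (Set.Iio (period a n (k + 1)) ×ˢ {x | ∃ r, k + 1 ≤ r ∧ a r = x}) := by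
  set L := period a n (k + 1)
  have hL : 0 < L := period_pos _
  ext u
  constructor
  · rintro ⟨j, rfl⟩
    obtain ⟨r, hr, hx⟩ := exists_pInf_eq hn (m := k + 1) (j := L * (j / L) + (L - 1))
      (by rw [add_assoc, Nat.sub_add_cancel hL]; exact dvd_add (dvd_mul_right _ _) dvd_rfl)
    refine ⟨(j % L, a r), ⟨Nat.mod_lt _ hL, r, hr, rfl⟩, ?_⟩
    dsimp only
    rw [← hx, ← factor_pInf hn (Nat.mod_lt _ hL), Nat.div_add_mod]
  · rintro ⟨⟨s, x⟩, ⟨hs, r, hr, rfl⟩, rfl⟩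
    obtain ⟨c, hc⟩ : ∃ c, period a n r = L * c := period_dvd_period hn hr
    obtain ⟨c, rfl⟩ : ∃ c', c = c' + 1 := by
      refine Nat.exists_eq_succ_of_ne_zero fun hc0 => ?_
      rw [hc0, mul_zero] at hc
      exact (period_pos r).ne' hc
    have hhole : L * c + (L - 1) = period a n r - 1 := by rw [hc, mul_add_one]; omega
    refine ⟨L * c + s, ?_⟩
    show factor (pInf a n) (L * c + s) L = windowWord a n k s (a r)
    rw [factor_pInf hn hs, hhole, pInf_period_sub_one hn]

theorem windowWord_self (hn : ∀ k, 2 ≤ n k) (k s : ℕ) :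
    windowWord a n k s (a k) = factor (periodicWord a n k) s (period a n (k + 1)) := by
  simp only [windowWord, factor]
  congr 1
  funext i
  split_ifs with h
  · exact (periodicWord_of_dvd ((period_dvd_period hn k.le_succ).trans h)).symm
  · rfl

theorem windowWord_self_mod (hn : ∀ k, 2 ≤ n k) (k s : ℕ) :
    windowWord a n k (s % period a n k) (a k) = windowWord a n k s (a k) := by
  simp only [windowWord_self hn, factor]
  congr 1
  funext i
  exact periodicWord_eq_of_modEq dvd_rfl ((Nat.mod_modEq s _).add_right _)

theorem eq_of_windowWord_eq {k s : ℕ} {x x' : A} (hs : s < period a n (k + 1))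
    (h : windowWord a n k s x = windowWord a n k s x') : x = x' := by
  have hi : period a n (k + 1) - 1 - s < (windowWord a n k s x).length := by
    rw [length_windowWord]; omega
  have hhole : period a n (k + 1) ∣ s + (period a n (k + 1) - 1 - s) + 1 := by
    rw [show s + (period a n (k + 1) - 1 - s) + 1 = period a n (k + 1) by omega]
  have := List.getElem_of_eq h hi
  rwa [getElem_windowWord, getElem_windowWord, if_pos hhole, if_pos hhole] at this

/-- Recognizability. Otherwise the word of level `m + 1` would have `g = gcd(d, period (m + 1))`
as a period, and reading it `g` letters before a hole of level `m + 1` would give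
`a (m + 1) = a m`. -/
theorem period_dvd_of_shift (hn : ∀ k, 2 ≤ n k) (ha : ∀ k, a (k + 1) ≠ a k) {m d : ℕ}
    (h : ∀ y, ¬ period a n (m + 1) ∣ y + 1 → ¬ period a n (m + 1) ∣ y + d + 1 →
      periodicWord a n m (y + d) = periodicWord a n m y) :
    period a n m ∣ d := by
  induction m generalizing d with
  | zero => rw [period_zero]; exact one_dvd d
  | succ m ih =>
    set P := period a n (m + 1)
    have hP : 0 < P := period_pos _
    by_contra hPd
    have hper_P : Periodic (periodicWord a n (m + 1)) P := fun y =>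
      periodicWord_eq_of_modEq dvd_rfl Nat.add_modEq_right
    have hper_g : Periodic (periodicWord a n (m + 1)) (Nat.gcd d P) :=
      (hper_P.of_eq_of_not_dvd (period_dvd_period hn (m + 1).le_succ)
        (not_period_succ_dvd hn _) hPd h).nat_gcd hper_P
    set g := Nat.gcd d P
    have hgP : g < P := lt_of_le_of_ne (Nat.le_of_dvd hP (Nat.gcd_dvd_right _ _))
      fun hg => hPd (hg ▸ Nat.gcd_dvd_left d P)
    have hg : 0 < g := Nat.gcd_pos_of_pos_right _ hP
    have hmg : period a n m ∣ g := ih fun y hy hyg => by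
      rw [← periodicWord_succ hn hy, ← periodicWord_succ hn hyg]
      exact hper_g y
    have hPg : ¬ P ∣ P - 1 - g + 1 := fun hdvd =>
      absurd (Nat.le_of_dvd (by omega) hdvd) (by omega)
    apply ha m
    calc a (m + 1) = periodicWord a n (m + 1) (P - 1 - g + g) :=
          (periodicWord_of_dvd (by rw [show P - 1 - g + g + 1 = P by omega])).symm
      _ = periodicWord a n (m + 1) (P - 1 - g) := hper_g _
      _ = periodicWord a n m (P - 1 - g) := periodicWord_succ hn hPg
      _ = a m := periodicWord_of_dvd (by
          rw [show P - 1 - g + 1 = P - g by omega]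
          exact Nat.dvd_sub (period_dvd_period hn m.le_succ) hmg)

theorem periodicWord_shift_of_windowWord_eq {k s d : ℕ} {x x' : A} (hn : ∀ k, 2 ≤ n k)
    (h : windowWord a n k s x = windowWord a n k (s + d) x') (y : ℕ)
    (hy : ¬ period a n (k + 1) ∣ y + 1) (hyd : ¬ period a n (k + 1) ∣ y + d + 1) :
    periodicWord a n k (y + d) = periodicWord a n k y := by
  set L := period a n (k + 1)
  have hL : 0 < L := period_pos _
  have hkL : period a n k ∣ L := period_dvd_period hn k.le_succ
  set i := (y + (L - s % L)) % L
  have hi : i < (windowWord a n k s x).length := by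
    rw [length_windowWord]; exact Nat.mod_lt _ hL
  have hsi : s + i ≡ y [MOD L] := by
    refine ((Nat.mod_modEq _ _).add_left s).trans ?_
    have := Nat.mod_lt s hL
    calc s + (y + (L - s % L)) = y + (s / L + 1) * L := by
          rw [add_one_mul, mul_comm]; have := Nat.div_add_mod s L; omega
      _ ≡ y [MOD L] := Nat.add_mul_mod_self_right _ _ _
  have hsdi : s + d + i ≡ y + d [MOD L] := by
    rw [add_right_comm]; exact hsi.add_right d
  have := List.getElem_of_eq h hi
  rw [getElem_windowWord, getElem_windowWord,
    if_neg (by rwa [(hsi.add_right 1).dvd_iff dvd_rfl]),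
    if_neg (by rwa [(hsdi.add_right 1).dvd_iff dvd_rfl])] at this
  rw [← periodicWord_eq_of_modEq hkL hsi, this, periodicWord_eq_of_modEq hkL hsdi]

theorem eq_self_and_modEq_of_windowWord_eq (hn : ∀ k, 2 ≤ n k) (ha : ∀ k, a (k + 1) ≠ a k)
    {k s s' : ℕ} {x x' : A} (hs : s < period a n (k + 1)) (hs' : s' < period a n (k + 1))
    (hne : s ≠ s') (h : windowWord a n k s x = windowWord a n k s' x') :
    x = a k ∧ x' = a k ∧ s ≡ s' [MOD period a n k] := by
  wlog hlt : s < s' generalizing s s' x x'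
  · obtain ⟨h₁, h₂, h₃⟩ := this hs' hs hne.symm h.symm (by omega)
    exact ⟨h₂, h₁, h₃.symm⟩
  obtain ⟨d, rfl⟩ : ∃ d, s' = s + d := ⟨s' - s, by omega⟩
  set L := period a n (k + 1)
  have hkL : period a n k ∣ L := period_dvd_period hn k.le_succ
  have hkd : period a n k ∣ d :=
    period_dvd_of_shift hn ha (periodicWord_shift_of_windowWord_eq hn h)
  have not_dvd : ∀ e, 0 < e → e < L → ¬ L ∣ e := fun e he heL hdvd =>
    absurd (Nat.le_of_dvd he hdvd) (by omega)
  -- each hole letter is read off the other word, where that position is not a hole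
  have hx : x = a k := by
    have e₁ : s + (L - 1 - s) + 1 = L := by omega
    have e₂ : s + d + (L - 1 - s) + 1 = L + d := by omega
    have := List.getElem_of_eq h (i := L - 1 - s) (by rw [length_windowWord]; omega)
    rw [getElem_windowWord, getElem_windowWord, e₁, e₂, if_pos dvd_rfl,
      if_neg (by rw [Nat.dvd_add_right dvd_rfl]; exact not_dvd d (by omega) (by omega))] at this
    rw [this, periodicWord_of_dvd (by rw [e₂]; exact dvd_add hkL hkd)]
  have hx' : x' = a k := by
    have e₁ : s + (L - 1 - (s + d)) + 1 = L - d := by omega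
    have e₂ : s + d + (L - 1 - (s + d)) + 1 = L := by omega
    have := List.getElem_of_eq h (i := L - 1 - (s + d)) (by rw [length_windowWord]; omega)
    rw [getElem_windowWord, getElem_windowWord, e₁, e₂, if_pos dvd_rfl,
      if_neg (not_dvd (L - d) (by omega) (by omega))] at this
    rw [← this, periodicWord_of_dvd (by rw [e₁]; exact Nat.dvd_sub hkL hkd)]
  exact ⟨hx, hx', (Nat.modEq_iff_dvd' (by omega)).mpr (by simpa using hkd)⟩

theorem card_image_windowWord (hn : ∀ k, 2 ≤ n k) (ha : ∀ k, a (k + 1) ≠ a k) (k : ℕ)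
    (B : Finset A) :
    ((Finset.range (period a n (k + 1)) ×ˢ B).image fun p => windowWord a n k p.1 p.2).card
      = period a n (k + 1) * (B.erase (a k)).card
        + period a n k * (B ∩ {a k}).card := by
  set L := period a n (k + 1)
  set w : ℕ × A → List A := fun p => windowWord a n k p.1 p.2
  set Φ₁ := Finset.range L ×ˢ B.erase (a k)
  set Φ₂ := Finset.range (period a n k) ×ˢ (B ∩ {a k})
  have hkL : period a n k ≤ L := (period_lt_period_succ hn k).le
  have himage : (Finset.range L ×ˢ B).image w = (Φ₁ ∪ Φ₂).image w := by
    apply le_antisymm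
    · rintro u hu
      simp only [Finset.mem_image, Finset.mem_product, Finset.mem_range] at hu
      obtain ⟨⟨s, x⟩, ⟨hs, hx⟩, rfl⟩ := hu
      by_cases hxk : x = a k
      · subst hxk
        exact Finset.mem_image.mpr ⟨(s % period a n k, a k), Finset.mem_union_right _
          (by simp [Φ₂, Nat.mod_lt _ (period_pos k), hx]), windowWord_self_mod hn k s⟩
      · exact Finset.mem_image_of_mem _ (Finset.mem_union_left _ (by simp [Φ₁, hs, hx, hxk]))
    · refine Finset.image_subset_image (Finset.union_subset ?_ ?_)
      · exact Finset.product_subset_product_right (Finset.erase_subset _ _)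
      · exact Finset.product_subset_product (Finset.range_subset_range.mpr hkL)
          Finset.inter_subset_left
  have hinj : Set.InjOn w ↑(Φ₁ ∪ Φ₂) := by
    rintro ⟨s, x⟩ hsx ⟨s', x'⟩ hsx' h
    simp only [Φ₁, Φ₂, Finset.coe_union, Set.mem_union, Finset.mem_coe, Finset.mem_product,
      Finset.mem_range, Finset.mem_erase, Finset.mem_inter, Finset.mem_singleton] at hsx hsx'
    have hs : s < L := by omega
    have hs' : s' < L := by omega
    by_cases hss : s = s'
    · subst hss
      exact Prod.ext rfl (eq_of_windowWord_eq hs h)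
    · obtain ⟨hx, hx', hmod⟩ := eq_self_and_modEq_of_windowWord_eq hn ha hs hs' hss h
      exact absurd (hmod.eq_of_lt_of_lt (by tauto) (by tauto)) hss
  have hdisj : Disjoint Φ₁ Φ₂ := by
    simp only [Φ₁, Φ₂, Finset.disjoint_left, Finset.mem_product, Finset.mem_erase,
      Finset.mem_inter, Finset.mem_singleton]
    tauto
  rw [himage, Finset.card_image_of_injOn hinj, Finset.card_union_of_disjoint hdisj,
    Finset.card_product, Finset.card_product, Finset.card_range, Finset.card_range]

end SimpleToeplitz

open SimpleToeplitz in
/-- The complexity of the simple Toeplitz subshift at length `|p^(k)| + 1` equals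
`(|A_k| − 1)(|p^(k)|+1) + 1_{A_{k+1}}(a_k)(|p^(k−1)|+1)`. -/
theorem complexity_at_block_length {A : Type*} [Fintype A] (a : ℕ → A) (n : ℕ → ℕ)
    (hn : ∀ k, 2 ≤ n k) (ha : ∀ k, a (k + 1) ≠ a k) (k : ℕ) :
    complexity (pInf a n) ((pBlock a n (k + 1)).length + 1)
      = (Nat.card ↥{x : A | ∃ j, k ≤ j ∧ a j = x} - 1) * ((pBlock a n (k + 1)).length + 1)
        + (if (∃ j, k + 1 ≤ j ∧ a j = a k) then 1 else 0) * ((pBlock a n k).length + 1) := by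
  set B := Finset.univ.filter fun x => ∃ j, k + 1 ≤ j ∧ a j = x
  have hwords : (Set.range fun j => factor (pInf a n) j (period a n (k + 1)))
      = ↑((Finset.range (period a n (k + 1)) ×ˢ B).image
          fun p => windowWord a n k p.1 p.2) := by
    rw [range_factor_pInf hn]
    simp [B]
  have hself : (B ∩ {a k}).card = if (∃ j, k + 1 ≤ j ∧ a j = a k) then 1 else 0 := by
    simp only [Finset.inter_singleton, B, Finset.mem_filter, Finset.mem_univ, true_and]
    split_ifs <;> rfl
  show complexity (pInf a n) (period a n (k + 1))
      = _ * period a n (k + 1) + _ * period a n k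
  rw [complexity_eq_ncard_range, hwords, Set.ncard_coe_finset, card_image_windowWord hn ha,
    natCard_setOf_exists_le_apply_eq, hself, Nat.add_sub_cancel]
  ring
end

section
/- For k ≥ 1, the equality a_k = a_{m(k)} holds if and only if m(k−1) < m(k), i.e., k is a point where the function m strictly increases. -/
/-- `mFun a k = min { j > k : {a_{k+1}, ..., a_j} = A_{k+1} }`, where
`A_{k+1} = {a_i : i ≥ k+1}`. -/
noncomputable def mFun {A : Type*} (a : ℕ → A) (k : ℕ) : ℕ :=
  sInf {j : ℕ | k < j ∧
    {x : A | ∃ i, k + 1 ≤ i ∧ i ≤ j ∧ a i = x} = {x : A | ∃ i, k + 1 ≤ i ∧ a i = x}}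

lemma mFun_mem {A : Type*} (a : ℕ → A) (k : ℕ)
    (h : ∃ j : ℕ, k < j ∧ {x : A | ∃ i, k + 1 ≤ i ∧ i ≤ j ∧ a i = x}
      = {x : A | ∃ i, k + 1 ≤ i ∧ a i = x}) :
    k < mFun a k ∧ {x : A | ∃ i, k + 1 ≤ i ∧ i ≤ mFun a k ∧ a i = x}
      = {x : A | ∃ i, k + 1 ≤ i ∧ a i = x} :=
  Nat.sInf_mem h

lemma mFun_le {A : Type*} (a : ℕ → A) {k j : ℕ}
    (h1 : k < j)
    (h2 : {x : A | ∃ i, k + 1 ≤ i ∧ i ≤ j ∧ a i = x} = {x : A | ∃ i, k + 1 ≤ i ∧ a i = x}) :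
    mFun a k ≤ j :=
  Nat.sInf_le ⟨h1, h2⟩

lemma mFun_min {A : Type*} (a : ℕ → A) {k j : ℕ} (h : j < mFun a k) :
    ¬(k < j ∧ {x : A | ∃ i, k + 1 ≤ i ∧ i ≤ j ∧ a i = x}
      = {x : A | ∃ i, k + 1 ≤ i ∧ a i = x}) :=
  Nat.notMem_of_lt_sInf h

/-- For `k ≥ 1`: `a_k = a_{m(k)}` holds iff `m` strictly increases at `k`,
i.e. `m(k−1) < m(k)`. -/
theorem letter_eq_iff_strict_increase {A : Type*} [Fintype A] (a : ℕ → A)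
    (ha : ∀ k, a (k + 1) ≠ a k)
    (hfin : ∀ k : ℕ, ∃ j : ℕ, k < j ∧
      {x : A | ∃ i, k + 1 ≤ i ∧ i ≤ j ∧ a i = x} = {x : A | ∃ i, k + 1 ≤ i ∧ a i = x})
    (k : ℕ) (hk : 1 ≤ k) :
    a k = a (mFun a k) ↔ mFun a (k - 1) < mFun a k := by
  obtain ⟨p, rfl⟩ : ∃ p, k = p + 1 := ⟨k - 1, (Nat.succ_pred_eq_of_pos hk).symm⟩
  have hps : p + 1 - 1 = p := by omega
  rw [hps]
  obtain ⟨hMgt, hMeq⟩ := mFun_mem a (p + 1) (hfin (p + 1))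
  obtain ⟨hNgt, hNeq⟩ := mFun_mem a p (hfin p)
  set M := mFun a (p + 1) with hMdef
  set N := mFun a p with hNdef
  -- N ≤ M
  have hNM : N ≤ M := by
    apply mFun_le
    · omega
    · ext x
      simp only [Set.mem_setOf_eq]
      constructor
      · rintro ⟨i, hi1, _, rfl⟩
        exact ⟨i, hi1, rfl⟩
      · rintro ⟨i, hi1, rfl⟩
        rcases eq_or_lt_of_le hi1 with h | h
        · exact ⟨i, hi1, by omega, rfl⟩
        · have hx : a i ∈ {x : A | ∃ i, p + 1 + 1 ≤ i ∧ a i = x} := ⟨i, by omega, rfl⟩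
          rw [← hMeq] at hx
          obtain ⟨j, hj1, hj2, hj3⟩ := hx
          exact ⟨j, by omega, hj2, hj3⟩
  -- N ≥ p + 2
  have hN2 : p + 2 ≤ N := by
    by_contra h
    have hNe : N = p + 1 := by omega
    have hx : a (p + 2) ∈ {x : A | ∃ i, p + 1 ≤ i ∧ a i = x} := ⟨p + 2, by omega, rfl⟩
    rw [← hNeq, hNe] at hx
    obtain ⟨i, hi1, hi2, hi3⟩ := hx
    have hip : i = p + 1 := by omega
    subst hip
    exact ha (p + 1) hi3.symm
  constructor
  · -- a (p+1) = a M → N < M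
    intro heq
    rcases lt_or_eq_of_le hNM with h | h
    · exact h
    · exfalso
      have hle : N ≤ M - 1 := by
        apply mFun_le
        · omega
        · ext x
          simp only [Set.mem_setOf_eq]
          constructor
          · rintro ⟨i, hi1, _, rfl⟩
            exact ⟨i, hi1, rfl⟩
          · intro hx
            have hx' : x ∈ {x : A | ∃ i, p + 1 ≤ i ∧ a i = x} := hx
            rw [← hNeq, h] at hx'
            replace hx := hx'
            obtain ⟨i, hi1, hi2, rfl⟩ := hx
            rcases eq_or_lt_of_le hi2 with h2 | h2
            · subst h2
              exact ⟨p + 1, le_refl _, by omega, heq⟩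
            · exact ⟨i, hi1, by omega, rfl⟩
      omega
  · -- N < M → a (p+1) = a M
    intro hlt
    have hM3 : p + 3 ≤ M := by omega
    -- seg(p+1, M-1) ≠ tail(p+1)
    have hne : {x : A | ∃ i, p + 1 + 1 ≤ i ∧ i ≤ M - 1 ∧ a i = x}
        ≠ {x : A | ∃ i, p + 1 + 1 ≤ i ∧ a i = x} := by
      intro hcon
      exact mFun_min a (show M - 1 < M by omega) ⟨by omega, hcon⟩
    -- find witness x ∈ tail(p+1) \ seg(p+1, M-1)
    have hsub : {x : A | ∃ i, p + 1 + 1 ≤ i ∧ i ≤ M - 1 ∧ a i = x}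
        ⊆ {x : A | ∃ i, p + 1 + 1 ≤ i ∧ a i = x} := by
      rintro x ⟨i, hi1, _, rfl⟩
      exact ⟨i, hi1, rfl⟩
    have hnsub : ¬ ({x : A | ∃ i, p + 1 + 1 ≤ i ∧ a i = x}
        ⊆ {x : A | ∃ i, p + 1 + 1 ≤ i ∧ i ≤ M - 1 ∧ a i = x}) := by
      intro hcon
      exact hne (Set.Subset.antisymm hsub hcon)
    obtain ⟨x, hx1, hx2⟩ := Set.not_subset.mp hnsub
    -- x = a M
    have hxM : x = a M := by
      rw [← hMeq] at hx1
      obtain ⟨i, hi1, hi2, rfl⟩ := hx1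
      rcases eq_or_lt_of_le hi2 with h2 | h2
      · rw [h2]
      · exact absurd ⟨i, hi1, by omega, rfl⟩ hx2
    subst hxM
    -- a M ∈ tail(p) = seg(p, N)
    have hx3 : a M ∈ {x : A | ∃ i, p + 1 ≤ i ∧ a i = x} := by
      obtain ⟨j, hj1, hj2⟩ := hx1
      exact ⟨j, by omega, hj2⟩
    rw [← hNeq] at hx3
    obtain ⟨i, hi1, hi2, hi3⟩ := hx3
    rcases eq_or_lt_of_le hi1 with h1 | h1
    · rw [← h1] at hi3
      exact hi3
    · exact absurd ⟨i, by omega, by omega, hi3⟩ hx2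
end

section
/- The period doubling subshift generated by the coding sequences (a_k) = (a,b,a,b,...) and (n_k) = (2,2,2,...) coincides with the subshift generated by the period doubling substitution σ: a ↦ ab, b ↦ aa; concretely, for every k ≥ 0 one has p^(k) a_{k+1} = σ^{k+1}(a). -/
def occursIn2 {A : Type*} (u : List A) (ω : ℤ → A) : Prop :=
  ∃ j : ℤ, ∀ i : Fin u.length, u.get i = ω (j + (i : ℕ))

def subshiftOf {A : Type*} (ρ : ℕ → A) : Set (ℤ → A) :=
  {ω | ∀ u : List A, occursIn2 u ω → occursIn1 u ρ}

/-- The period doubling substitution `σ : a ↦ ab, b ↦ aa` on the alphabet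
`{a, b} = {true, false}`. -/
def pdSub : Bool → List Bool := fun x => if x then [true, false] else [true, true]

/-- The substitution extended to words by concatenation. -/
def pdSubst (w : List Bool) : List Bool := (w.map pdSub).flatten

/-- The alternating coding sequence `(a_k) = (a, b, a, b, ...)` with `a = true`. -/
def pdCoding : ℕ → Bool := fun k => if k % 2 = 0 then true else false

/-- The fixed point `σ^∞(a)` of the period doubling substitution. -/
def pdFix : ℕ → Bool := fun i => (pdSubst^[i + 1] [true]).getD i true

/-!
For `n_k = 2` the blocks satisfy `p^(k+1) = p^(k) a_{k+1} p^(k)`; here `pBlock a n (k + 1)` is the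
paper's `p^(k)` and `pBlock a n 0` is the empty word. If a substitution `s` maps every `a_k` to
`a_0 a_{k+1}`, as `σ` does for `(a, b, a, b, …)`, then `s(p^(k)) a_0 = p^(k+1)`: the image of
`p^(k) a_{k+1} p^(k)` is `s(p^(k)) a_0 a_{k+2} s(p^(k))`, and the appended `a_0` completes the last
factor. Hence `s(p^(k) a_{k+1}) = p^(k+1) a_{k+2}`, i.e. `s^(k+1)(a_0) = p^(k) a_{k+1}`. This word
is a prefix of `p^(k+1)` of length `2^(k+1) > k`, so the limit word and `σ^∞(a)` agree letter by
letter, and so do their subshifts.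
-/

section ConstantTwo

variable {A : Type*} (a : ℕ → A)

theorem pBlock_const_two_succ (k : ℕ) :
    pBlock a (fun _ => 2) (k + 1) = pBlock a (fun _ => 2) k ++ a k :: pBlock a (fun _ => 2) k := by
  simp [pBlock]

theorem length_pBlock_const_two (k : ℕ) : (pBlock a (fun _ => 2) k).length = 2 ^ k - 1 := by
  induction k with
  | zero => rfl
  | succ k ih =>
    rw [pBlock_const_two_succ, List.length_append, List.length_cons, ih, pow_succ]
    have := Nat.one_le_two_pow (n := k)
    omega

theorem pInf_const_two_eq_getD (d : A) (i : ℕ) :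
    pInf a (fun _ => 2) i = (pBlock a (fun _ => 2) (i + 1) ++ [a (i + 1)]).getD i d := by
  have hi : i < (pBlock a (fun _ => 2) (i + 1) ++ [a (i + 1)]).length := by
    rw [List.length_append, length_pBlock_const_two]
    have := Nat.lt_two_pow_self (n := i + 1)
    simp only [List.length_singleton]
    omega
  rw [pInf, pBlock_const_two_succ _ (i + 1), ← List.singleton_append, ← List.append_assoc,
    List.getD_append _ _ _ _ hi, List.getD_eq_getElem _ _ hi, List.getD_eq_getElem _ _ hi]

variable {a} {s : A → List A}

theorem flatMap_pBlock_const_two_append (hs : ∀ k, s (a k) = [a 0, a (k + 1)]) (k : ℕ) :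
    (pBlock a (fun _ => 2) k).flatMap s ++ [a 0] = pBlock a (fun _ => 2) (k + 1) := by
  induction k with
  | zero => rfl
  | succ k ih =>
    calc (pBlock a (fun _ => 2) (k + 1)).flatMap s ++ [a 0]
        = ((pBlock a (fun _ => 2) k).flatMap s ++ [a 0])
            ++ a (k + 1) :: ((pBlock a (fun _ => 2) k).flatMap s ++ [a 0]) := by
          simp [pBlock_const_two_succ a k, hs]
      _ = pBlock a (fun _ => 2) (k + 2) := by rw [ih, pBlock_const_two_succ a (k + 1)]

theorem flatMap_pBlock_const_two_append_coding (hs : ∀ k, s (a k) = [a 0, a (k + 1)]) (k : ℕ) :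
    (pBlock a (fun _ => 2) k ++ [a k]).flatMap s
      = pBlock a (fun _ => 2) (k + 1) ++ [a (k + 1)] := by
  rw [List.flatMap_append, List.flatMap_singleton, hs, ← flatMap_pBlock_const_two_append hs k,
    List.append_assoc]
  rfl

theorem iterate_flatMap_const_two (hs : ∀ k, s (a k) = [a 0, a (k + 1)]) (k : ℕ) :
    (fun w => w.flatMap s)^[k] [a 0] = pBlock a (fun _ => 2) k ++ [a k] := by
  induction k with
  | zero => rfl
  | succ k ih =>
    rw [Function.iterate_succ_apply', ih, flatMap_pBlock_const_two_append_coding hs]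

theorem pInf_const_two_eq_getD_iterate (hs : ∀ k, s (a k) = [a 0, a (k + 1)]) (i : ℕ) :
    pInf a (fun _ => 2) i = ((fun w => w.flatMap s)^[i + 1] [a 0]).getD i (a 0) := by
  rw [iterate_flatMap_const_two hs, pInf_const_two_eq_getD]

end ConstantTwo

theorem pdSubst_eq_flatMap : pdSubst = fun w => w.flatMap pdSub := by
  funext w
  exact List.flatMap_def.symm

theorem pdSub_pdCoding (k : ℕ) : pdSub (pdCoding k) = [pdCoding 0, pdCoding (k + 1)] := by
  rcases Nat.mod_two_eq_zero_or_one k with h | h <;>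
    simp [pdSub, pdCoding, h, Nat.succ_mod_two_eq_zero_iff]

/-- The period doubling subshift (coding sequences `(a,b,a,b,...)`, `(2,2,2,...)`)
coincides with the subshift of the period doubling substitution `σ : a ↦ ab, b ↦ aa`;
concretely `p^(k) a_{k+1} = σ^{k+1}(a)` for every `k ≥ 0`. -/
theorem periodDoubling_substitution :
    (∀ k : ℕ, pBlock pdCoding (fun _ => 2) (k + 1) ++ [pdCoding (k + 1)]
        = pdSubst^[k + 1] [true]) ∧
    subshiftOf (pInf pdCoding (fun _ => 2)) = subshiftOf pdFix := by
  rw [pdSubst_eq_flatMap]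
  refine ⟨fun k => (iterate_flatMap_const_two pdSub_pdCoding (k + 1)).symm, ?_⟩
  congr 1
  funext i
  exact pInf_const_two_eq_getD_iterate pdSub_pdCoding i
end

section
/- Three-block Gordon argument for cocycles: let Ω be a subshift, ω ∈ Ω, and suppose there is a sequence l_i → ∞ such that ω restricted to (−2l_i, −l_i], (−l_i, 0], and (0, l_i] gives three equal words for every i. Then for every locally constant map A: Ω → SL(2,ℝ) and every nonzero Φ ∈ ℝ², the norm ‖A(j, ω)Φ‖ does not tend to 0 as j → +∞ and j → −∞ simultaneously; in particular ‖A(j,ω)Φ‖ cannot decay exponentially in both directions. -/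
attribute [local instance] Matrix.frobeniusNormedAddCommGroup

/-- The `J`-fold shift on `A^ℤ`: `(T^J ω)(i) = ω(i + J)`. -/
def shiftIter {A : Type*} (J : ℤ) (ω : ℤ → A) : ℤ → A := fun i => ω (i + J)

/-- The cocycle for nonnegative times: `A(j, ω) = M(T^{j-1}ω) ⋯ M(ω)`. -/
noncomputable def cocycleN {A : Type*} (M : (ℤ → A) → Matrix (Fin 2) (Fin 2) ℝ) :
    ℕ → (ℤ → A) → Matrix (Fin 2) (Fin 2) ℝ
  | 0, _ => 1
  | j + 1, ω => M (shiftIter j ω) * cocycleN M j ω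

/-- The full two-sided cocycle, with `A(j, ω) = (A(-j, T^j ω))⁻¹` for `j < 0`. -/
noncomputable def cocycleZ {A : Type*} (M : (ℤ → A) → Matrix (Fin 2) (Fin 2) ℝ)
    (j : ℤ) (ω : ℤ → A) : Matrix (Fin 2) (Fin 2) ℝ :=
  if 0 ≤ j then cocycleN M j.toNat ω else (cocycleN M (-j).toNat (shiftIter j ω))⁻¹

lemma shiftIter_shiftIter {A : Type*} (J K : ℤ) (ω : ℤ → A) :
    shiftIter J (shiftIter K ω) = shiftIter (J + K) ω := by
  funext i; simp [shiftIter, add_assoc]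

lemma cocycleN_add {A : Type*} (M : (ℤ → A) → Matrix (Fin 2) (Fin 2) ℝ)
    (m n : ℕ) (ω : ℤ → A) :
    cocycleN M (m + n) ω = cocycleN M m (shiftIter (n : ℤ) ω) * cocycleN M n ω := by
  induction m with
  | zero => simp [cocycleN]
  | succ m ih =>
    have : m + 1 + n = (m + n) + 1 := by omega
    rw [this]
    show M (shiftIter ((m + n : ℕ) : ℤ) ω) * cocycleN M (m + n) ω = _
    rw [ih]
    show _ = M (shiftIter (m : ℤ) (shiftIter (n : ℤ) ω)) * cocycleN M m (shiftIter (n : ℤ) ω)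
      * cocycleN M n ω
    rw [shiftIter_shiftIter]
    have : ((m + n : ℕ) : ℤ) = (m : ℤ) + n := by push_cast; ring
    rw [this, mul_assoc]

lemma cocycleN_congr {A : Type*} (M : (ℤ → A) → Matrix (Fin 2) (Fin 2) ℝ)
    (n : ℕ) (ω₁ ω₂ : ℤ → A)
    (h : ∀ j : ℕ, j < n → M (shiftIter (j : ℤ) ω₁) = M (shiftIter (j : ℤ) ω₂)) :
    cocycleN M n ω₁ = cocycleN M n ω₂ := by
  induction n with
  | zero => rfl
  | succ n ih =>
    show M (shiftIter (n : ℤ) ω₁) * cocycleN M n ω₁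
        = M (shiftIter (n : ℤ) ω₂) * cocycleN M n ω₂
    rw [h n (by omega), ih (fun j hj => h j (by omega))]

lemma cocycleN_det {A : Type*} (Ω : Set (ℤ → A))
    (hinv : ∀ ω ∈ Ω, ∀ J : ℤ, shiftIter J ω ∈ Ω)
    (M : (ℤ → A) → Matrix (Fin 2) (Fin 2) ℝ)
    (hdet : ∀ ρ ∈ Ω, (M ρ).det = 1)
    (n : ℕ) (ρ : ℤ → A) (hρ : ρ ∈ Ω) : (cocycleN M n ρ).det = 1 := by
  induction n with
  | zero => simp [cocycleN]
  | succ n ih =>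
    show ((M (shiftIter (n : ℤ) ρ)) * cocycleN M n ρ).det = 1
    rw [Matrix.det_mul, ih, hdet _ (hinv ρ hρ n), one_mul]

lemma CH_sl2 (N : Matrix (Fin 2) (Fin 2) ℝ) (h : N.det = 1) :
    N + N⁻¹ = (Matrix.trace N) • 1 := by
  have hinv : N⁻¹ = N.adjugate := by
    rw [Matrix.inv_def, h]; simp
  rw [hinv, Matrix.adjugate_fin_two, Matrix.trace_fin_two]
  ext i j
  fin_cases i <;> fin_cases j <;>
    simp [Matrix.one_apply] <;> ring

lemma gordon_key_ineq (N : Matrix (Fin 2) (Fin 2) ℝ) (h : N.det = 1) (v : Fin 2 → ℝ) :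
    ‖v‖ ≤ ‖N.mulVec v‖ + ‖N⁻¹.mulVec v‖ + ‖(N⁻¹ * N⁻¹).mulVec v‖ := by
  have hdet0 : N.det ≠ 0 := by rw [h]; norm_num
  have hCH := CH_sl2 N h
  have h1 : N.mulVec v + N⁻¹.mulVec v = Matrix.trace N • v := by
    rw [← Matrix.add_mulVec, hCH, Matrix.smul_mulVec, Matrix.one_mulVec]
  have h2m : (1 : Matrix (Fin 2) (Fin 2) ℝ) + N⁻¹ * N⁻¹ = Matrix.trace N • N⁻¹ := by
    have : N⁻¹ * (N + N⁻¹) = N⁻¹ * (Matrix.trace N • 1) := by rw [hCH]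
    rwa [Matrix.mul_add, Matrix.nonsing_inv_mul N (isUnit_iff_ne_zero.mpr hdet0), Matrix.mul_smul, mul_one] at this
  have h2 : v + (N⁻¹ * N⁻¹).mulVec v = Matrix.trace N • N⁻¹.mulVec v := by
    have := congrArg (fun P => Matrix.mulVec P v) h2m
    simpa [Matrix.add_mulVec, Matrix.one_mulVec, Matrix.smul_mulVec] using this
  rcases le_or_gt 1 |Matrix.trace N| with ht | ht
  · have : ‖v‖ ≤ ‖N.mulVec v‖ + ‖N⁻¹.mulVec v‖ := by
      calc ‖v‖ ≤ |Matrix.trace N| * ‖v‖ := le_mul_of_one_le_left (norm_nonneg v) ht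
        _ = ‖Matrix.trace N • v‖ := by rw [norm_smul, Real.norm_eq_abs]
        _ = ‖N.mulVec v + N⁻¹.mulVec v‖ := by rw [h1]
        _ ≤ ‖N.mulVec v‖ + ‖N⁻¹.mulVec v‖ := norm_add_le _ _
    linarith [norm_nonneg ((N⁻¹ * N⁻¹).mulVec v)]
  · have hv : v = Matrix.trace N • N⁻¹.mulVec v - (N⁻¹ * N⁻¹).mulVec v := by
      rw [← h2]; abel
    have : ‖v‖ ≤ ‖N⁻¹.mulVec v‖ + ‖(N⁻¹ * N⁻¹).mulVec v‖ := by
      calc ‖v‖ = ‖Matrix.trace N • N⁻¹.mulVec v - (N⁻¹ * N⁻¹).mulVec v‖ := by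
            rw [← hv]
        _ ≤ ‖Matrix.trace N • N⁻¹.mulVec v‖ + ‖(N⁻¹ * N⁻¹).mulVec v‖ := norm_sub_le _ _
        _ ≤ ‖N⁻¹.mulVec v‖ + ‖(N⁻¹ * N⁻¹).mulVec v‖ := by
            rw [norm_smul, Real.norm_eq_abs]
            have := mul_le_of_le_one_left (norm_nonneg (N⁻¹.mulVec v)) ht.le
            linarith
    linarith [norm_nonneg (N.mulVec v)]

lemma mulVec_norm_bound (P : Matrix (Fin 2) (Fin 2) ℝ) :
    ∃ c : ℝ, 0 ≤ c ∧ ∀ v : Fin 2 → ℝ, ‖P.mulVec v‖ ≤ c * ‖v‖ := by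
  let L := LinearMap.toContinuousLinearMap (Matrix.mulVecLin P)
  refine ⟨‖L‖, norm_nonneg _, fun v => ?_⟩
  have := L.le_opNorm v
  simpa [L, Matrix.mulVecLin_apply] using this

/-- Three-block Gordon argument for cocycles: if `ω` carries arbitrarily long threefold
repetitions `(−2lᵢ, −lᵢ] = (−lᵢ, 0] = (0, lᵢ]`, then for every locally constant
`SL(2,ℝ)`-valued map `M` and every nonzero `Φ ∈ ℝ²` the norms `‖A(j, ω)Φ‖` do not tend
to `0` as `j → +∞` and `j → −∞` simultaneously. -/
theorem gordon_three_block {A : Type*} (Ω : Set (ℤ → A))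
    (hinv : ∀ ω ∈ Ω, ∀ J : ℤ, shiftIter J ω ∈ Ω)
    (ω : ℤ → A) (hω : ω ∈ Ω) (l : ℕ → ℕ)
    (hl : Filter.Tendsto l Filter.atTop Filter.atTop)
    (hrep : ∀ i : ℕ, ∀ t : ℤ, -(2 * (l i : ℤ)) < t → t ≤ 0 → ω t = ω (t + (l i : ℤ)))
    (M : (ℤ → A) → Matrix (Fin 2) (Fin 2) ℝ)
    (hdet : ∀ ρ ∈ Ω, (M ρ).det = 1)
    (hlc : ∃ J₀ : ℕ, ∀ ω₁ ω₂ : ℤ → A, (∀ i : ℤ, |i| ≤ (J₀ : ℤ) → ω₁ i = ω₂ i) → M ω₁ = M ω₂)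
    (Φ : Fin 2 → ℝ) (hΦ : Φ ≠ 0) :
    ¬ (Filter.Tendsto (fun j : ℕ => ‖(cocycleZ M (j : ℤ) ω).mulVec Φ‖)
          Filter.atTop (nhds 0) ∧
        Filter.Tendsto (fun j : ℕ => ‖(cocycleZ M (-(j : ℤ)) ω).mulVec Φ‖)
          Filter.atTop (nhds 0)) := by
  obtain ⟨r, hJ⟩ := hlc
  rintro ⟨hf, hg⟩
  -- fixed boundary matrices
  set E : Matrix (Fin 2) (Fin 2) ℝ := cocycleN M r (shiftIter (-(r : ℤ)) ω) with hE
  set F : Matrix (Fin 2) (Fin 2) ℝ := cocycleN M (r + 1) ω with hF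
  have hdetF : F.det = 1 := cocycleN_det Ω hinv M hdet _ ω hω
  have hdetF0 : F.det ≠ 0 := by rw [hdetF]; norm_num
  obtain ⟨c₁, hc₁0, hc₁⟩ := mulVec_norm_bound E
  obtain ⟨c₂, hc₂0, hc₂⟩ := mulVec_norm_bound F⁻¹
  -- the pointwise Gordon estimate
  have key : ∀ n : ℕ, 2 * r + 2 ≤ n →
      (∀ t : ℤ, -(2 * (n : ℤ)) < t → t ≤ 0 → ω t = ω (t + (n : ℤ))) →
      ‖Φ‖ ≤ c₁ * ‖(cocycleZ M ((n - r : ℕ) : ℤ) ω).mulVec Φ‖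
          + ‖(cocycleZ M (-(n : ℤ)) ω).mulVec Φ‖
          + c₂ * ‖(cocycleZ M (-((2 * n - r - 1 : ℕ) : ℤ)) ω).mulVec Φ‖ := by
    intro n hn hrepn
    set σ : ℤ → A := shiftIter (-(n : ℤ)) ω with hσ
    set B : Matrix (Fin 2) (Fin 2) ℝ := cocycleN M n σ with hB
    have hdetB : B.det = 1 := cocycleN_det Ω hinv M hdet _ σ (hinv ω hω _)
    have hdetB0 : B.det ≠ 0 := by rw [hdetB]; norm_num
    -- tool for M-equality along shifts of ω
    have Mshift : ∀ s t : ℤ, (∀ i : ℤ, |i| ≤ (r : ℤ) → ω (i + s) = ω (i + t)) →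
        M (shiftIter s ω) = M (shiftIter t ω) := by
      intro s t h
      exact hJ _ _ (fun i hi => h i hi)
    -- Step A : B = E * cocycleN M (n-r) ω
    have hA : B = E * cocycleN M (n - r) ω := by
      have hn1 : r + (n - r) = n := by omega
      have hsplit : cocycleN M n σ
          = cocycleN M r (shiftIter ((n - r : ℕ) : ℤ) σ) * cocycleN M (n - r) σ := by
        conv_lhs => rw [← hn1]
        exact cocycleN_add M r (n - r) σ
      have hsh : shiftIter ((n - r : ℕ) : ℤ) σ = shiftIter (-(r : ℤ)) ω := by
        rw [hσ, shiftIter_shiftIter]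
        congr 1
        push_cast [Nat.cast_sub (by omega : r ≤ n)]
        ring
      have htail : cocycleN M (n - r) σ = cocycleN M (n - r) ω := by
        apply cocycleN_congr
        intro j hj
        have : shiftIter (j : ℤ) σ = shiftIter ((j : ℤ) - n) ω := by
          rw [hσ, shiftIter_shiftIter]; congr 1 <;> ring_nf
        rw [this]
        apply Mshift
        intro i hi
        rw [abs_le] at hi
        have ht1 : -(2 * (n : ℤ)) < i + ((j : ℤ) - n) := by omega
        have ht2 : i + ((j : ℤ) - n) ≤ 0 := by omega
        have harg : i + ((j : ℤ) - n) + n = i + j := by ring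
        rw [hrepn _ ht1 ht2, harg]
      rw [hB, hsplit, hsh, htail, ← hE]
    -- Step B : B = Q * F
    set Q : Matrix (Fin 2) (Fin 2) ℝ :=
      cocycleN M (n - r - 1) (shiftIter ((r : ℤ) + 1 - n) ω) with hQ
    have hBQ : B = Q * F := by
      have hn1 : (n - r - 1) + (r + 1) = n := by omega
      have hsplit : cocycleN M n σ
          = cocycleN M (n - r - 1) (shiftIter ((r + 1 : ℕ) : ℤ) σ) * cocycleN M (r + 1) σ := by
        conv_lhs => rw [← hn1]
        exact cocycleN_add M (n - r - 1) (r + 1) σ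
      have hsh : shiftIter ((r + 1 : ℕ) : ℤ) σ = shiftIter ((r : ℤ) + 1 - n) ω := by
        rw [hσ, shiftIter_shiftIter]; congr 1 <;> (push_cast; ring_nf)
      have htail : cocycleN M (r + 1) σ = cocycleN M (r + 1) ω := by
        apply cocycleN_congr
        intro j hj
        have : shiftIter (j : ℤ) σ = shiftIter ((j : ℤ) - n) ω := by
          rw [hσ, shiftIter_shiftIter]; congr 1 <;> ring_nf
        rw [this]
        apply Mshift
        intro i hi
        rw [abs_le] at hi
        have ht1 : -(2 * (n : ℤ)) < i + ((j : ℤ) - n) := by omega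
        have ht2 : i + ((j : ℤ) - n) ≤ 0 := by omega
        have harg : i + ((j : ℤ) - n) + n = i + j := by ring
        rw [hrepn _ ht1 ht2, harg]
      rw [hB, hsplit, hsh, htail, ← hF, ← hQ]
    -- Step C : the double block
    set m₂ : ℕ := 2 * n - r - 1 with hm₂
    set σ₂ : ℤ → A := shiftIter (-(m₂ : ℤ)) ω with hσ₂
    have hm₂c : ((m₂ : ℕ) : ℤ) = 2 * (n : ℤ) - r - 1 := by
      push_cast [hm₂, Nat.cast_sub (by omega : r + 1 ≤ 2 * n - r),
        Nat.cast_sub (by omega : r ≤ 2 * n)]; omega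
    have hC : cocycleN M m₂ σ₂ = B * Q := by
      have hn1 : n + (n - r - 1) = m₂ := by omega
      have hsplit : cocycleN M m₂ σ₂
          = cocycleN M n (shiftIter ((n - r - 1 : ℕ) : ℤ) σ₂) * cocycleN M (n - r - 1) σ₂ := by
        conv_lhs => rw [← hn1]
        exact cocycleN_add M n (n - r - 1) σ₂
      have hcast : ((n - r - 1 : ℕ) : ℤ) = (n : ℤ) - r - 1 := by
        push_cast [Nat.cast_sub (by omega : 1 ≤ n - r), Nat.cast_sub (by omega : r ≤ n)]; ring
      have hsh : shiftIter ((n - r - 1 : ℕ) : ℤ) σ₂ = σ := by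
        rw [hσ₂, shiftIter_shiftIter, hσ]; congr 1; rw [hcast, hm₂c]; ring
      have htail : cocycleN M (n - r - 1) σ₂ = Q := by
        rw [hQ]
        apply cocycleN_congr
        intro j hj
        have e1 : shiftIter (j : ℤ) σ₂ = shiftIter ((j : ℤ) - m₂) ω := by
          rw [hσ₂, shiftIter_shiftIter]; congr 1 <;> ring_nf
        have e2 : shiftIter (j : ℤ) (shiftIter ((r : ℤ) + 1 - n) ω)
            = shiftIter ((j : ℤ) + (r + 1 - n)) ω := by
          rw [shiftIter_shiftIter]
        rw [e1, e2]
        apply Mshift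
        intro i hi
        rw [abs_le] at hi
        have ht1 : -(2 * (n : ℤ)) < i + ((j : ℤ) - m₂) := by omega
        have ht2 : i + ((j : ℤ) - m₂) ≤ 0 := by omega
        have harg : i + ((j : ℤ) - m₂) + n = i + ((j : ℤ) + ((r : ℤ) + 1 - n)) := by omega
        rw [hrepn _ ht1 ht2, harg]
      rw [hsplit, hsh, htail, ← hB]
    -- relate Q to B and F
    have hQBF : Q = B * F⁻¹ := by
      rw [hBQ, mul_assoc, Matrix.mul_nonsing_inv F (isUnit_iff_ne_zero.mpr hdetF0), mul_one]
    -- cocycle values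
    have hposval : cocycleZ M ((n - r : ℕ) : ℤ) ω = cocycleN M (n - r) ω := by
      simp [cocycleZ]
    have hnegval : cocycleZ M (-(n : ℤ)) ω = B⁻¹ := by
      have hnn : ¬ (0 ≤ -(n : ℤ)) := by omega
      rw [cocycleZ, if_neg hnn, hB, hσ]
      simp
    have hneg2val : cocycleZ M (-((m₂ : ℕ) : ℤ)) ω = F * B⁻¹ * B⁻¹ := by
      have hnn : ¬ (0 ≤ -((m₂ : ℕ) : ℤ)) := by omega
      rw [cocycleZ, if_neg hnn]
      have : ((-(-((m₂ : ℕ) : ℤ))).toNat) = m₂ := by omega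
      rw [this, ← hσ₂, hC, hQBF]
      rw [Matrix.mul_inv_rev, Matrix.mul_inv_rev,
        Matrix.nonsing_inv_nonsing_inv F (by rw [hdetF]; exact isUnit_one), mul_assoc]
    -- assemble
    have hkey := gordon_key_ineq B hdetB Φ
    have t1 : ‖B.mulVec Φ‖ ≤ c₁ * ‖(cocycleZ M ((n - r : ℕ) : ℤ) ω).mulVec Φ‖ := by
      rw [hposval, hA, ← Matrix.mulVec_mulVec]
      exact hc₁ _
    have t2 : ‖B⁻¹.mulVec Φ‖ = ‖(cocycleZ M (-(n : ℤ)) ω).mulVec Φ‖ := by rw [hnegval]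
    have t3 : ‖(B⁻¹ * B⁻¹).mulVec Φ‖
        ≤ c₂ * ‖(cocycleZ M (-((m₂ : ℕ) : ℤ)) ω).mulVec Φ‖ := by
      have : B⁻¹ * B⁻¹ = F⁻¹ * (F * B⁻¹ * B⁻¹) := by
        rw [← mul_assoc, ← mul_assoc, Matrix.nonsing_inv_mul F (isUnit_iff_ne_zero.mpr hdetF0), one_mul]
      rw [this, ← Matrix.mulVec_mulVec, ← hneg2val]
      exact hc₂ _
    calc ‖Φ‖ ≤ ‖B.mulVec Φ‖ + ‖B⁻¹.mulVec Φ‖ + ‖(B⁻¹ * B⁻¹).mulVec Φ‖ := hkey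
      _ ≤ _ := by rw [t2]; gcongr
  -- the three vanishing sequences
  have hsub1 : Filter.Tendsto (fun i => l i - r) Filter.atTop Filter.atTop := by
    refine Filter.tendsto_atTop_atTop.mpr (fun b => ?_)
    obtain ⟨N, hN⟩ := Filter.tendsto_atTop_atTop.mp hl (b + r)
    exact ⟨N, fun a ha => by have := hN a ha; omega⟩
  have hsub3 : Filter.Tendsto (fun i => 2 * l i - r - 1) Filter.atTop Filter.atTop := by
    refine Filter.tendsto_atTop_atTop.mpr (fun b => ?_)
    obtain ⟨N, hN⟩ := Filter.tendsto_atTop_atTop.mp hl (b + r + 1)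
    exact ⟨N, fun a ha => by have := hN a ha; omega⟩
  have h1 : Filter.Tendsto
      (fun i => ‖(cocycleZ M ((l i - r : ℕ) : ℤ) ω).mulVec Φ‖) Filter.atTop (nhds 0) :=
    hf.comp hsub1
  have h2 : Filter.Tendsto
      (fun i => ‖(cocycleZ M (-(l i : ℤ)) ω).mulVec Φ‖) Filter.atTop (nhds 0) :=
    hg.comp hl
  have h3 : Filter.Tendsto
      (fun i => ‖(cocycleZ M (-((2 * l i - r - 1 : ℕ) : ℤ)) ω).mulVec Φ‖)
      Filter.atTop (nhds 0) := hg.comp hsub3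
  have hsum : Filter.Tendsto
      (fun i => c₁ * ‖(cocycleZ M ((l i - r : ℕ) : ℤ) ω).mulVec Φ‖
        + ‖(cocycleZ M (-(l i : ℤ)) ω).mulVec Φ‖
        + c₂ * ‖(cocycleZ M (-((2 * l i - r - 1 : ℕ) : ℤ)) ω).mulVec Φ‖)
      Filter.atTop (nhds 0) := by
    have := ((h1.const_mul c₁).add h2).add (h3.const_mul c₂)
    simpa using this
  have hev : ∀ᶠ i in Filter.atTop,
      ‖Φ‖ ≤ c₁ * ‖(cocycleZ M ((l i - r : ℕ) : ℤ) ω).mulVec Φ‖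
        + ‖(cocycleZ M (-(l i : ℤ)) ω).mulVec Φ‖
        + c₂ * ‖(cocycleZ M (-((2 * l i - r - 1 : ℕ) : ℤ)) ω).mulVec Φ‖ := by
    filter_upwards [hl.eventually_ge_atTop (2 * r + 2)] with i hi
    exact key (l i) hi (hrep i)
  have : ‖Φ‖ ≤ 0 := ge_of_tendsto hsum hev
  exact hΦ (norm_le_zero_iff.mp this)
end

section
/- Sturmian block recursion: define s_0 := b, s_1 := b^{n_1−1}a, s_{k+1} := s_k^{n_{k+1}} s_{k−1} for a sequence (n_k)_{k≥1} of positive integers with n_1 ≥ 1. Then for all k ≥ 2: (a) s_{2k} ends with ab, (b) s_{2k+1} ends with ba, (c) s_k p_{k+1} = s_{k+1} p_k where p_k denotes s_k with its last two letters removed, and (d) p_k is a palindrome. -/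
/-!
Write `t_k` for the two-letter word `ab` (k even) or `ba` (k odd). The core of the argument is a
word `w_k` with `s_k s_{k+1} = w_k t_{k+1}` and `s_{k+1} s_k = w_k t_k`, both proved by induction
from `w_{k+1} = s_{k+1}^{n_{k+2}} w_k`. Hence `s_k` ends with `t_k` for `k ≥ 2`, and cancelling
these suffixes gives `s_k p_{k+1} = w_k = s_{k+1} p_k`. A second induction shows
`w_k · reverse s_k = s_k w_k` and `w_k · reverse s_{k+1} = s_{k+1} w_k`; moving reversed blocks
across `w_k` this way shows that every word `s_{k+1}^m w_k` is a palindrome, and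
`p_{k+2} = s_{k+1}^{n_{k+2} - 1} w_k` is one of them.
-/

/-- The Sturmian blocks: `s_0 = b`, `s_1 = b^{n_1 − 1} a`, `s_{k+1} = s_k^{n_{k+1}} s_{k−1}`,
over the alphabet `{a, b} = {true, false}`. -/
def sturm (n : ℕ → ℕ) : ℕ → List Bool
  | 0 => [false]
  | 1 => List.replicate (n 1 - 1) false ++ [true]
  | k + 2 => (List.replicate (n (k + 2)) (sturm n (k + 1))).flatten ++ sturm n k

/-- `p_k` is `s_k` with its last two letters removed. -/
def pSturm (n : ℕ → ℕ) (k : ℕ) : List Bool := ((sturm n k).dropLast).dropLast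

namespace List

variable {α : Type*}

theorem append_flatten_replicate_of_append_eq {a b c : List α} (h : a ++ b = c ++ a) (m : ℕ) :
    a ++ (replicate m b).flatten = (replicate m c).flatten ++ a := by
  induction m with
  | zero => simp
  | succ m ih =>
    simp only [replicate_succ, flatten_cons, ← append_assoc, h]
    rw [append_assoc, ih, append_assoc]

theorem append_flatten_replicate_self (l : List α) (m : ℕ) :
    l ++ (replicate m l).flatten = (replicate m l).flatten ++ l :=
  append_flatten_replicate_of_append_eq rfl m

theorem reverse_flatten_replicate_append_of_append_reverse_eq {s w : List α}
    (hw : w.reverse = w) (h : w ++ s.reverse = s ++ w) (m : ℕ) :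
    ((replicate m s).flatten ++ w).reverse = (replicate m s).flatten ++ w := by
  rw [reverse_append, hw, reverse_flatten, map_replicate, reverse_replicate,
    append_flatten_replicate_of_append_eq h]

end List

open List

def sturmSuffix (k : ℕ) : List Bool := if Even k then [true, false] else [false, true]

/-- `w_k`, the common value of `s_k p_{k+1}` and `s_{k+1} p_k`. -/
def sturmCore (n : ℕ → ℕ) : ℕ → List Bool
  | 0 => replicate (n 1 - 1) false
  | k + 1 => (replicate (n (k + 2)) (sturm n (k + 1))).flatten ++ sturmCore n k

theorem sturmSuffix_add_two (k : ℕ) : sturmSuffix (k + 2) = sturmSuffix k := by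
  simp [sturmSuffix, Nat.even_add_one]

section

variable (n : ℕ → ℕ)

theorem sturm_append_sturm_succ (k : ℕ) :
    sturm n k ++ sturm n (k + 1) = sturmCore n k ++ sturmSuffix (k + 1) ∧
    sturm n (k + 1) ++ sturm n k = sturmCore n k ++ sturmSuffix k := by
  induction k with
  | zero =>
    simp only [sturm, sturmCore, sturmSuffix]
    refine ⟨?_, by simp⟩
    rw [singleton_append, ← cons_append, ← replicate_succ, replicate_succ']
    simp
  | succ k ih =>
    simp only [sturm, sturmCore, sturmSuffix_add_two, append_assoc]
    refine ⟨?_, by rw [ih.1]⟩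
    rw [← append_assoc, append_flatten_replicate_self, append_assoc, ih.2]

theorem sturmCore_append_reverse_sturm (k : ℕ) :
    sturmCore n k ++ (sturm n k).reverse = sturm n k ++ sturmCore n k ∧
    sturmCore n k ++ (sturm n (k + 1)).reverse = sturm n (k + 1) ++ sturmCore n k := by
  induction k with
  | zero =>
    simp only [sturm, sturmCore, reverse_append, reverse_replicate, reverse_singleton]
    refine ⟨?_, by simp⟩
    rw [← replicate_succ', singleton_append, ← replicate_succ]
  | succ k ih =>
    simp only [sturm, sturmCore, append_assoc]
    refine ⟨by rw [ih.2, ← append_assoc, ← append_flatten_replicate_self, append_assoc], ?_⟩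
    simp only [reverse_append, reverse_flatten, map_replicate, reverse_replicate]
    rw [← append_assoc (sturmCore n k), ih.1, append_assoc,
      append_flatten_replicate_of_append_eq ih.2]

theorem sturmCore_reverse (k : ℕ) : (sturmCore n k).reverse = sturmCore n k := by
  induction k with
  | zero => simp [sturmCore]
  | succ k ih =>
    exact reverse_flatten_replicate_append_of_append_reverse_eq ih
      (sturmCore_append_reverse_sturm n k).2 _

theorem sturm_add_two_eq (k : ℕ) (hn : 0 < n (k + 2)) :
    sturm n (k + 2) =
      ((replicate (n (k + 2) - 1) (sturm n (k + 1))).flatten ++ sturmCore n k) ++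
        sturmSuffix k := by
  obtain ⟨m, hm⟩ := Nat.exists_eq_add_one_of_ne_zero hn.ne'
  rw [sturm, hm, replicate_succ', flatten_append, flatten_singleton, append_assoc,
    (sturm_append_sturm_succ n k).2, Nat.add_sub_cancel, append_assoc]

theorem pSturm_add_two (k : ℕ) (hn : 0 < n (k + 2)) :
    pSturm n (k + 2) = (replicate (n (k + 2) - 1) (sturm n (k + 1))).flatten ++ sturmCore n k := by
  rw [pSturm, sturm_add_two_eq n k hn, sturmSuffix]
  split_ifs <;> simp

theorem sturm_eq_pSturm_append {k : ℕ} (hk : 2 ≤ k) (hn : 0 < n k) :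
    sturm n k = pSturm n k ++ sturmSuffix k := by
  obtain ⟨k, rfl⟩ := Nat.exists_eq_add_of_le' hk
  rw [pSturm_add_two n k hn, sturm_add_two_eq n k hn, sturmSuffix_add_two]

theorem sturm_append_pSturm_succ {k : ℕ} (hk : 1 ≤ k) (hn : 0 < n (k + 1)) :
    sturm n k ++ pSturm n (k + 1) = sturmCore n k := by
  have h := (sturm_append_sturm_succ n k).1
  rw [sturm_eq_pSturm_append n (by omega) hn, ← append_assoc] at h
  exact append_cancel_right h

theorem sturm_succ_append_pSturm {k : ℕ} (hk : 2 ≤ k) (hn : 0 < n k) :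
    sturm n (k + 1) ++ pSturm n k = sturmCore n k := by
  have h := (sturm_append_sturm_succ n k).2
  rw [sturm_eq_pSturm_append n hk hn, ← append_assoc] at h
  exact append_cancel_right h

theorem pSturm_reverse {k : ℕ} (hk : 2 ≤ k) (hn : 0 < n k) :
    (pSturm n k).reverse = pSturm n k := by
  obtain ⟨k, rfl⟩ := Nat.exists_eq_add_of_le' hk
  rw [pSturm_add_two n k hn]
  exact reverse_flatten_replicate_append_of_append_reverse_eq (sturmCore_reverse n k)
    (sturmCore_append_reverse_sturm n k).2 _

end

/-- For all `k ≥ 2`: (a) `s_{2k}` ends with `ab`, (b) `s_{2k+1}` ends with `ba`,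
(c) `s_k p_{k+1} = s_{k+1} p_k`, and (d) `p_k` is a palindrome. -/
theorem sturm_block_properties (n : ℕ → ℕ) (hn : ∀ k, 1 ≤ k → 1 ≤ n k) :
    ∀ k : ℕ, 2 ≤ k →
      (sturm n (2 * k) = pSturm n (2 * k) ++ [true, false]) ∧
      (sturm n (2 * k + 1) = pSturm n (2 * k + 1) ++ [false, true]) ∧
      (sturm n k ++ pSturm n (k + 1) = sturm n (k + 1) ++ pSturm n k) ∧
      ((pSturm n k).reverse = pSturm n k) := by
  intro k hk
  refine ⟨?_, ?_, ?_, pSturm_reverse n hk (hn k (by omega))⟩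
  · simpa [sturmSuffix] using sturm_eq_pSturm_append n (k := 2 * k) (by omega) (hn _ (by omega))
  · simpa [sturmSuffix, Nat.even_add_one] using
      sturm_eq_pSturm_append n (k := 2 * k + 1) (by omega) (hn _ (by omega))
  · rw [sturm_append_pSturm_succ n (by omega) (hn _ (by omega)),
      sturm_succ_append_pSturm n hk (hn k (by omega))]
end

section
/- The one-sided infinite Sturmian word p_∞ := lim_k p_k satisfies the positivity-of-quasiweights condition (PQ) with constant 1/12: for every prefix length j ≥ 1, liminf_{L→∞} (j/L)·#_nonoverlap(p_∞[1..j], p_∞[1..L]) ≥ 1/12. -/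
/-- The one-sided infinite Sturmian word `p_∞ = lim_k p_k`. -/
def sturmInf (n : ℕ → ℕ) : ℕ → Bool := fun i => (pSturm n (i + 4)).getD i false

/-- The prefix of length `L` of a one-sided infinite word. -/
def prefixWord {A : Type*} (ρ : ℕ → A) (L : ℕ) : List A := List.ofFn fun i : Fin L => ρ i

/-- `u` occurs in `v` starting at position `s`. -/
def occursAt {A : Type*} (u v : List A) (s : ℕ) : Prop :=
  s + u.length ≤ v.length ∧ (v.drop s).take u.length = u

/-- The maximal number of pairwise non-overlapping occurrences of `u` in `v`. -/
noncomputable def nonoverlap {A : Type*} (u v : List A) : ℕ :=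
  sSup {m : ℕ | ∃ S : Finset ℕ, S.card = m ∧ (∀ s ∈ S, occursAt u v s) ∧
    ∀ s ∈ S, ∀ t ∈ S, s ≠ t → s + u.length ≤ t ∨ t + u.length ≤ s}


section Words

variable {α : Type*} {u v : List α}

@[simp]
theorem length_prefixWord (ρ : ℕ → α) (L : ℕ) : (prefixWord ρ L).length = L :=
  List.length_ofFn

theorem occursAt_iff {s : ℕ} : occursAt u v s ↔ ∃ x y, x.length = s ∧ v = x ++ u ++ y := by
  constructor
  · rintro ⟨hs, hu⟩
    refine ⟨v.take s, v.drop (s + u.length), by rw [List.length_take]; omega, ?_⟩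
    conv_lhs => rw [← v.take_append_drop s, ← (v.drop s).take_append_drop u.length, hu]
    simp [List.drop_drop, List.append_assoc]
  · rintro ⟨x, y, rfl, rfl⟩
    simp [occursAt]

theorem occursAt_append_left {g : ℕ} (h : occursAt u v g) (w : List α) :
    occursAt u (v ++ w) g := by
  obtain ⟨x, y, rfl, rfl⟩ := occursAt_iff.1 h
  exact occursAt_iff.2 ⟨x, y ++ w, rfl, by simp⟩

theorem occursAt_append_right {g : ℕ} (h : occursAt u v g) (w : List α) :
    occursAt u (w ++ v) (w.length + g) := by
  obtain ⟨x, y, rfl, rfl⟩ := occursAt_iff.1 h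
  exact occursAt_iff.2 ⟨w ++ x, y, by simp, by simp⟩

theorem occursAt_length_append (h : u <+: v) (w : List α) : occursAt u (w ++ v) w.length := by
  obtain ⟨t, rfl⟩ := h
  exact occursAt_iff.2 ⟨w, t, rfl, by simp⟩

theorem occursAt.take {g L : ℕ} (h : occursAt u v g) (hL : g + u.length ≤ L) :
    occursAt u (v.take L) g := by
  obtain ⟨x, y, rfl, rfl⟩ := occursAt_iff.1 h
  refine occursAt_iff.2 ⟨x, y.take (L - (x ++ u).length), rfl, ?_⟩
  rw [List.take_append, List.take_of_length_le (by simpa using hL)]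

theorem card_le_of_forall_occursAt {S : Finset ℕ} (hS : ∀ s ∈ S, occursAt u v s) :
    S.card ≤ v.length + 1 - u.length := by
  calc S.card ≤ (Finset.range (v.length + 1 - u.length)).card :=
        Finset.card_le_card fun s hs => by have := (hS s hs).1; rw [Finset.mem_range]; omega
    _ = v.length + 1 - u.length := Finset.card_range _

theorem bddAbove_nonoverlap (u v : List α) :
    BddAbove {m : ℕ | ∃ S : Finset ℕ, S.card = m ∧ (∀ s ∈ S, occursAt u v s) ∧
      ∀ s ∈ S, ∀ t ∈ S, s ≠ t → s + u.length ≤ t ∨ t + u.length ≤ s} :=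
  ⟨_, fun _ ⟨_, hS, hocc, _⟩ => hS ▸ card_le_of_forall_occursAt hocc⟩

theorem nonoverlap_le_length : nonoverlap u v ≤ v.length + 1 - u.length :=
  csSup_le ⟨0, ∅, by simp⟩ fun _ ⟨_, hS, hocc, _⟩ =>
    hS ▸ card_le_of_forall_occursAt hocc

theorem card_le_nonoverlap {S : Finset ℕ} (hocc : ∀ s ∈ S, occursAt u v s)
    (hsep : ∀ s ∈ S, ∀ t ∈ S, s ≠ t → s + u.length ≤ t ∨ t + u.length ≤ s) :
    S.card ≤ nonoverlap u v :=
  le_csSup (bddAbove_nonoverlap u v) ⟨S, rfl, hocc, hsep⟩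

end Words

section Gaps

variable {α : Type*} {u v b : List α}

def OccursWithGap (u v : List α) (d : ℕ) : Prop :=
  ∀ X, X + d + u.length ≤ v.length → ∃ g, X ≤ g ∧ g ≤ X + d ∧ occursAt u v g

theorem OccursWithGap.mono {d e : ℕ} (h : OccursWithGap u v d) (hde : d ≤ e) :
    OccursWithGap u v e := fun X hX => by
  obtain ⟨g, hXg, hgX, hocc⟩ := h X (by omega)
  exact ⟨g, hXg, by omega, hocc⟩

theorem OccursWithGap.take {d : ℕ} (h : OccursWithGap u v d) (L : ℕ) :
    OccursWithGap u (v.take L) d := fun X hX => by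
  rw [List.length_take] at hX
  obtain ⟨g, hXg, hgX, hocc⟩ := h X (by omega)
  exact ⟨g, hXg, hgX, hocc.take (by omega)⟩

/-- The occurrences in the windows `[q (d + |u|), q (d + |u|) + d]` do not overlap. -/
theorem OccursWithGap.div_le_nonoverlap {d : ℕ} (h : OccursWithGap u v d) (hu : 0 < u.length) :
    v.length / (d + u.length) ≤ nonoverlap u v := by
  set p := d + u.length
  have hwin : ∀ q < v.length / p, ∃ g, q * p ≤ g ∧ g ≤ q * p + d ∧ occursAt u v g := by
    intro q hq
    have : (q + 1) * p ≤ v.length / p * p := Nat.mul_le_mul_right p hq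
    have := Nat.div_mul_le_self v.length p
    exact h (q * p) (by rw [Nat.succ_mul] at *; omega)
  choose! g hg using hwin
  have hsep : ∀ q < v.length / p, ∀ q' < v.length / p, q < q' → g q + u.length ≤ g q' := by
    intro q hq q' hq' hqq'
    have : (q + 1) * p ≤ q' * p := Nat.mul_le_mul_right p hqq'
    have := hg q hq
    have := hg q' hq'
    rw [Nat.succ_mul] at *
    omega
  have hcard : ((Finset.range (v.length / p)).image g).card = v.length / p := by
    rw [Finset.card_image_of_injOn, Finset.card_range]
    refine StrictMonoOn.injOn fun q hq q' hq' hlt => ?_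
    have := hsep q (Finset.mem_range.1 hq) q' (Finset.mem_range.1 hq') hlt
    omega
  rw [← hcard]
  refine card_le_nonoverlap ?_ ?_ <;> simp only [Finset.forall_mem_image, Finset.mem_range]
  · exact fun q hq => (hg q hq).2.2
  · intro q hq q' hq' hne
    rcases Nat.lt_or_gt_of_ne (ne_of_apply_ne g hne) with hlt | hgt
    · exact .inl (hsep q hq q' hq' hlt)
    · exact .inr (hsep q' hq' q hq hgt)

/-- If `u` is a prefix of `b^N w`, it recurs at every multiple of `|b|` that leaves room for `u`
before `w`. -/
theorem occursWithGap_flatten_replicate_append {w : List α} {N : ℕ} (hb : 0 < b.length)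
    (hu : u <+: (List.replicate N b).flatten ++ w) :
    OccursWithGap u ((List.replicate N b).flatten ++ w) (b.length + w.length) := by
  intro X hX
  set i := X / b.length + 1
  have hlen : ∀ m, ((List.replicate m b).flatten).length = m * b.length := by simp
  have hi : X < i * b.length ∧ i * b.length ≤ X + b.length := by
    have := Nat.lt_div_mul_add (a := X) hb
    have := Nat.div_mul_le_self X b.length
    rw [Nat.succ_mul]; omega
  simp only [List.length_append, hlen] at hX
  have hiN : i ≤ N := Nat.le_of_mul_le_mul_right (by omega) hb
  have hsplit : ∀ m m', m + m' = N → (List.replicate N b).flatten =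
      (List.replicate m b).flatten ++ (List.replicate m' b).flatten := by
    rintro m m' rfl; rw [List.replicate_add, List.flatten_append]
  have hu' : u <+: (List.replicate (N - i) b).flatten := by
    refine List.prefix_of_prefix_length_le hu ?_ ?_
    · rw [hsplit (N - i) i (by omega), List.append_assoc]; exact List.prefix_append _ _
    · rw [hlen, Nat.sub_mul]; omega
  obtain ⟨t, ht⟩ := hu'
  refine ⟨i * b.length, hi.1.le, by omega, occursAt_iff.2 ⟨_, t ++ w, hlen i, ?_⟩⟩
  rw [hsplit i (N - i) (by omega), ← ht]
  simp

end Gaps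

section Tiling

variable {α : Type*} {u B b P V W : List α}

/-- Concatenations of blocks `B` and isolated blocks `b`, starting with `B`: the shape of the
decomposition of `p_∞` into `s_k`-blocks and isolated `s_{k-1}`-blocks. -/
inductive IsTiling (B b : List α) : List α → Prop
  | nil : IsTiling B b []
  | big {W : List α} : IsTiling B b W → IsTiling B b (B ++ W)
  | bigSmall {W : List α} : IsTiling B b W → IsTiling B b (B ++ b ++ W)

namespace IsTiling

theorem self : IsTiling B b B := by simpa using (nil : IsTiling B b []).big

theorem self_append : IsTiling B b (B ++ b) := by simpa using (nil : IsTiling B b []).bigSmall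

theorem append (hV : IsTiling B b V) (hW : IsTiling B b W) : IsTiling B b (V ++ W) := by
  induction hV with
  | nil => exact hW
  | big _ ih => simpa only [List.append_assoc] using ih.big
  | bigSmall _ ih => simpa only [List.append_assoc] using ih.bigSmall

theorem flatten_replicate (hV : IsTiling B b V) (m : ℕ) :
    IsTiling B b (List.replicate m V).flatten := by
  induction m with
  | zero => exact nil
  | succ m ih => simpa only [List.replicate_succ, List.flatten_cons] using hV.append ih

theorem prefix_of_length_le (hW : IsTiling B b W) (huB : u <+: B) (hu : u.length ≤ W.length) :
    u <+: W := by
  cases hW with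
  | nil => simp_all
  | big => exact huB.trans (List.prefix_append _ _)
  | bigSmall => exact huB.trans (by simp only [List.append_assoc]; exact List.prefix_append _ _)

/-- A window of `B ++ P ++ W` either lies in `W`, or starts early enough in `B` to contain an
occurrence inside `B`, or else reaches past the start of `W`, which begins with `u`. -/
private theorem occursWithGap_append_append {d e : ℕ} (hB : OccursWithGap u B d)
    (huB : u <+: B) (hP : P.length ≤ e) (hW : IsTiling B b W)
    (ih : OccursWithGap u W (d + u.length + e)) :
    OccursWithGap u (B ++ P ++ W) (d + u.length + e) := by
  intro X hX
  simp only [List.length_append] at hX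
  by_cases hXW : B.length + P.length ≤ X
  · obtain ⟨g, hXg, hgX, hocc⟩ := ih (X - (B.length + P.length)) (by omega)
    exact ⟨(B ++ P).length + g, by rw [List.length_append]; omega,
      by rw [List.length_append]; omega, occursAt_append_right hocc _⟩
  by_cases hXB : X + d + u.length ≤ B.length
  · obtain ⟨g, hXg, hgX, hocc⟩ := hB X hXB
    refine ⟨g, hXg, by omega, ?_⟩
    simpa only [List.append_assoc] using occursAt_append_left hocc (P ++ W)
  · refine ⟨(B ++ P).length, by rw [List.length_append]; omega,
      by rw [List.length_append]; omega, ?_⟩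
    exact occursAt_length_append (hW.prefix_of_length_le huB (by omega)) _

theorem occursWithGap {d : ℕ} (hW : IsTiling B b W) (hB : OccursWithGap u B d)
    (huB : u <+: B) : OccursWithGap u W (d + u.length + b.length) := by
  induction hW with
  | nil =>
    intro X hX
    simp only [List.length_nil] at hX
    have hu : u = [] := List.eq_nil_of_length_eq_zero (by omega)
    refine ⟨X, le_rfl, by omega, occursAt_iff.2 ⟨[], [], ?_, by simp [hu]⟩⟩
    rw [List.length_nil]; omega
  | big hW ih =>
    simpa using occursWithGap_append_append (P := []) hB huB (Nat.zero_le _) hW ih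
  | bigSmall hW ih => exact occursWithGap_append_append hB huB le_rfl hW ih

end IsTiling

end Tiling

section Sturm

variable (n : ℕ → ℕ)

theorem length_sturm_add_two (k : ℕ) :
    (sturm n (k + 2)).length = n (k + 2) * (sturm n (k + 1)).length + (sturm n k).length := by
  simp [sturm]

theorem one_le_length_sturm : ∀ k, 1 ≤ (sturm n k).length
  | 0 => le_rfl
  | 1 => by simp [sturm]
  | k + 2 => by rw [length_sturm_add_two]; have := one_le_length_sturm k; omega

variable {n} (hn : ∀ k, 1 ≤ k → 1 ≤ n k)
include hn

theorem length_sturm_add_le (k : ℕ) :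
    (sturm n (k + 1)).length + (sturm n k).length ≤ (sturm n (k + 2)).length := by
  rw [length_sturm_add_two]
  have := Nat.le_mul_of_pos_left (sturm n (k + 1)).length (hn (k + 2) (by omega))
  omega

theorem length_sturm_le_succ : ∀ k, (sturm n k).length ≤ (sturm n (k + 1)).length
  | 0 => one_le_length_sturm n 1
  | k + 1 => (Nat.le_add_right _ _).trans (length_sturm_add_le hn k)

theorem le_length_sturm : ∀ k, k ≤ (sturm n k).length
  | 0 => Nat.zero_le _
  | 1 => one_le_length_sturm n 1
  | k + 2 => by
    have := le_length_sturm (k + 1)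
    have := one_le_length_sturm n k
    have := length_sturm_add_le hn k
    omega

theorem exists_length_sturm_le_lt {j : ℕ} (hj : 1 ≤ j) :
    ∃ k, (sturm n k).length ≤ j ∧ j < (sturm n (k + 1)).length := by
  have hex : ∃ k, j < (sturm n (k + 1)).length := ⟨j, le_length_sturm hn (j + 1)⟩
  refine ⟨Nat.find hex, ?_, Nat.find_spec hex⟩
  rcases h : Nat.find hex with _ | k
  · exact hj
  · exact not_lt.1 (Nat.find_min hex (h ▸ k.lt_succ_self))

theorem exists_sturm_succ_eq_flatten_replicate_append (k : ℕ) :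
    ∃ N w, sturm n (k + 1) = (List.replicate N (sturm n k)).flatten ++ w ∧
      w.length ≤ (sturm n k).length := by
  cases k with
  | zero => exact ⟨n 1 - 1, [true], by simp [sturm, List.flatten_replicate_singleton], le_rfl⟩
  | succ k => exact ⟨n (k + 2), sturm n k, rfl, length_sturm_le_succ hn k⟩

theorem sturm_prefix_sturm_succ {k : ℕ} (hk : 1 ≤ k) : sturm n k <+: sturm n (k + 1) := by
  obtain ⟨k, rfl⟩ := Nat.exists_eq_add_of_le' hk
  obtain ⟨m, hm⟩ := Nat.exists_eq_add_of_le' (hn (k + 2) (by omega))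
  show _ <+: (List.replicate (n (k + 2)) (sturm n (k + 1))).flatten ++ sturm n k
  rw [hm, List.replicate_succ, List.flatten_cons, List.append_assoc]
  exact List.prefix_append _ _

theorem sturm_prefix_sturm {k m : ℕ} (hk : 1 ≤ k) (hkm : k ≤ m) :
    sturm n k <+: sturm n m := by
  induction m, hkm using Nat.le_induction with
  | base => exact List.prefix_refl _
  | succ m hkm ih => exact ih.trans (sturm_prefix_sturm_succ hn (hk.trans hkm))

theorem sturmInf_eq_getElem {M i : ℕ} (hM : 1 ≤ M) (hi : i < (sturm n M).length) :
    sturmInf n i = (sturm n M)[i] := by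
  set M' := max M (i + 4)
  have hp : pSturm n (i + 4) <+: sturm n M' :=
    ((List.dropLast_prefix _).trans (List.dropLast_prefix _)).trans
      (sturm_prefix_sturm hn (by omega) (le_max_right _ _))
  have hip : i < (pSturm n (i + 4)).length := by
    have := le_length_sturm hn (i + 4)
    simp only [pSturm, List.length_dropLast]
    omega
  rw [sturmInf, List.getD_eq_getElem _ _ hip, hp.getElem hip,
    (sturm_prefix_sturm hn hM (le_max_left M (i + 4))).getElem hi]

theorem prefixWord_sturmInf {M L : ℕ} (hM : 1 ≤ M) (hL : L ≤ (sturm n M).length) :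
    prefixWord (sturmInf n) L = (sturm n M).take L :=
  List.ext_getElem (by simp [prefixWord, hL]) fun i hi _ => by
    simp only [prefixWord, List.getElem_ofFn, List.getElem_take]
    exact sturmInf_eq_getElem hn hM (by rw [length_prefixWord] at hi; omega)

theorem isTiling_sturm (k : ℕ) :
    ∀ r, IsTiling (sturm n (k + 1)) (sturm n k) (sturm n (k + 1 + r))
  | 0 => IsTiling.self
  | 1 => by
    obtain ⟨m, hm⟩ := Nat.exists_eq_add_of_le' (hn (k + 2) (by omega))
    show IsTiling _ _ ((List.replicate (n (k + 2)) (sturm n (k + 1))).flatten ++ sturm n k)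
    rw [hm, List.replicate_succ', List.flatten_append, List.flatten_singleton,
      List.append_assoc]
    exact (IsTiling.self.flatten_replicate m).append IsTiling.self_append
  | r + 2 => ((isTiling_sturm k (r + 1)).flatten_replicate _).append (isTiling_sturm k r)

theorem occursWithGap_prefixWord_sturmInf {j : ℕ} (hj : 1 ≤ j) (L : ℕ) :
    OccursWithGap (prefixWord (sturmInf n) j) (prefixWord (sturmInf n) L) (4 * j) := by
  obtain ⟨k, hkj, hjk⟩ := exists_length_sturm_le_lt hn hj
  obtain ⟨N, w, hdec, hw⟩ := exists_sturm_succ_eq_flatten_replicate_append hn k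
  have hu : prefixWord (sturmInf n) j <+: sturm n (k + 1) := by
    rw [prefixWord_sturmInf hn k.succ_pos hjk.le]; exact List.take_prefix _ _
  have hB : OccursWithGap (prefixWord (sturmInf n) j) (sturm n (k + 1))
      ((sturm n k).length + w.length) := by
    rw [hdec] at hu ⊢
    exact occursWithGap_flatten_replicate_append (one_le_length_sturm n k) hu
  have hW := (isTiling_sturm hn k L).occursWithGap hB hu
  have hL : L ≤ (sturm n (k + 1 + L)).length :=
    (Nat.le_add_left L (k + 1)).trans (le_length_sturm hn _)
  rw [prefixWord_sturmInf hn (by omega) hL]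
  exact (hW.mono (e := 4 * j) (by rw [length_prefixWord]; omega)).take L

end Sturm

theorem div_mul_le_of_le {j L N : ℕ} (hN : N ≤ L) : (j : ℝ) / L * N ≤ j := by
  rw [div_mul_comm]
  exact mul_le_of_le_one_left j.cast_nonneg
    (div_le_one_of_le₀ (by exact_mod_cast hN) L.cast_nonneg)

theorem one_div_twelve_le_div_mul {j L N : ℕ} (hj : 1 ≤ j) (hL : 5 * j ≤ L)
    (hN : L / (5 * j) ≤ N) : (1 : ℝ) / 12 ≤ j / L * N := by
  have hdiv := Nat.div_add_mod L (5 * j)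
  have hmod := Nat.mod_lt L (show 0 < 5 * j by omega)
  have hq : j ≤ j * (L / (5 * j)) := Nat.le_mul_of_pos_right j (Nat.div_pos hL (by omega))
  have hjN : j * (L / (5 * j)) ≤ j * N := Nat.mul_le_mul_left j hN
  have h12 : (L : ℝ) ≤ 12 * (j * N) := by
    rw [mul_assoc] at hdiv
    exact_mod_cast (show L ≤ 12 * (j * N) by omega)
  rw [div_mul_eq_mul_div, le_div_iff₀ (by exact_mod_cast (show 0 < L by omega))]
  linarith

/-- The Sturmian word `p_∞` satisfies the positivity-of-quasiweights condition (PQ) with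
constant `1/12`: for every prefix length `j ≥ 1`,
`liminf_{L→∞} (j/L)·#_nonoverlap(p_∞[1..j], p_∞[1..L]) ≥ 1/12`. -/
theorem sturm_PQ (n : ℕ → ℕ) (hn : ∀ k, 1 ≤ k → 1 ≤ n k) (j : ℕ) (hj : 1 ≤ j) :
    (1 : ℝ) / 12 ≤ Filter.liminf (fun L : ℕ =>
      (j : ℝ) / (L : ℝ) *
        (nonoverlap (prefixWord (sturmInf n) j) (prefixWord (sturmInf n) L) : ℝ))
      Filter.atTop := by
  have hupper : ∀ L : ℕ,
      nonoverlap (prefixWord (sturmInf n) j) (prefixWord (sturmInf n) L) ≤ L := fun L => by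
    have := nonoverlap_le_length (u := prefixWord (sturmInf n) j) (v := prefixWord (sturmInf n) L)
    simp only [length_prefixWord] at this
    omega
  have hlower : ∀ L : ℕ,
      L / (5 * j) ≤ nonoverlap (prefixWord (sturmInf n) j) (prefixWord (sturmInf n) L) := by
    intro L
    have := (occursWithGap_prefixWord_sturmInf hn hj L).div_le_nonoverlap
      (by rw [length_prefixWord]; omega)
    simpa [show 4 * j + j = 5 * j by ring] using this
  refine Filter.le_liminf_of_le (Filter.isBoundedUnder_of
    ⟨(j : ℝ), fun L => div_mul_le_of_le (hupper L)⟩).isCoboundedUnder_ge ?_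
  filter_upwards [Filter.eventually_ge_atTop (5 * j)] with L hL
  exact one_div_twelve_le_div_mul hj hL (hlower L)
end
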